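/- arXiv:1712.09006 — 14 statements merged into one kernel-verified Lean document; each statement's English description precedes it below -/
import Mathlib

section
/- (0-deterministic variant of the Kochen–Specker theorem) For every natural number d with d ≥ 3, there is no 0-deterministic QIVPM on ℂ^d; that is, there is no QIVPM (L, R) on the projectors of ℂ^d such that every projector P satisfies (L P, R P) = (0, 0) or (L P, R P) = (1, 1). -/
open Matrix
open scoped ComplexOrder

/-- A projector on `ℂ^d`: an idempotent, self-adjoint matrix. -/
def IsProjector {d : ℕ} (P : Matrix (Fin d) (Fin d) ℂ) : Prop :=
  P * P = P ∧ Pᴴ = P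

/-- A quantum interval-valued probability measure (QIVPM) on `ℂ^d`,
given by the pair of interval-endpoint functions `L ≤ R`. -/
def IsQIVPM {d : ℕ} (L R : Matrix (Fin d) (Fin d) ℂ → ℝ) : Prop :=
  (∀ P, IsProjector P → 0 ≤ L P ∧ L P ≤ R P ∧ R P ≤ 1) ∧
  (L 0 = 0 ∧ R 0 = 0) ∧
  (L 1 = 1 ∧ R 1 = 1) ∧
  (∀ P, IsProjector P → L (1 - P) = 1 - R P ∧ R (1 - P) = 1 - L P) ∧
  (∀ P₀ P₁, IsProjector P₀ → IsProjector P₁ → P₀ * P₁ = P₁ * P₀ →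
    L P₀ + L P₁ ≤ L (P₀ + P₁ - P₀ * P₁) + L (P₀ * P₁) ∧
    R (P₀ + P₁ - P₀ * P₁) + R (P₀ * P₁) ≤ R P₀ + R P₁)

/-- A QIVPM is `δ`-deterministic if every projector's interval lies in `[0,δ]` or `[1-δ,1]`. -/
def IsDeltaDet {d : ℕ} (δ : ℝ) (L R : Matrix (Fin d) (Fin d) ℂ → ℝ) : Prop :=
  ∀ P, IsProjector P → R P ≤ δ ∨ 1 - δ ≤ L P

/-- A QIVPM is `0`-deterministic if every projector is assigned `[0,0]` or `[1,1]`. -/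
def IsZeroDet {d : ℕ} (L R : Matrix (Fin d) (Fin d) ℂ → ℝ) : Prop :=
  ∀ P, IsProjector P → (L P = 0 ∧ R P = 0) ∨ (L P = 1 ∧ R P = 1)

/-- A state (density matrix) on `ℂ^d`. -/
def IsState {d : ℕ} (ρ : Matrix (Fin d) (Fin d) ℂ) : Prop :=
  ρ.PosSemidef ∧ ρ.trace = 1

/-!
A 0-deterministic QIVPM has `L = R` on projectors, so the two convexity inequalities make `L`
additive on orthogonal projectors, with values in `{0, 1}`. The diagonal projectors sum to `1`,
so one of them, `single k k 1`, has value `1`. Embedding `ℝ³` isometrically into `ℂ^d` along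
`e_k` and two further coordinates, `a ↦ L (projector onto ℝ a)` becomes a Kochen–Specker colouring
of `ℝ³`: `0` or `1` on nonzero vectors, with sum `1` on every orthogonal frame.

No such colouring exists. If `X` has colour `1` and `Y = μ • (X + Z)` with `Z ⊥ X` and
`8 ‖Z‖² ≤ ‖X‖²`, then `Y` has colour `1`: otherwise, for a suitable `W ⊥ X, Z`, orthogonal triples
force both vectors `‖X‖² • (Z ± W) - (‖W‖² + ‖Z‖²) • X` to have colour `1`, although they are
orthogonal. Six such steps carry `X` to an orthogonal vector of the same length, which must have
colour `0`.
-/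

structure IsKSColoring (g : (Fin 3 → ℝ) → ℝ) : Prop where
  eq_zero_or_eq_one : ∀ a, a ≠ 0 → g a = 0 ∨ g a = 1
  sum_eq_one : ∀ u : Fin 3 → Fin 3 → ℝ, (∀ i, u i ≠ 0) →
    Pairwise (fun i j => u i ⬝ᵥ u j = 0) → ∑ i, g (u i) = 1

lemma ne_zero_of_dotProduct_ne_zero {n : Type*} [Fintype n] {v w : n → ℝ} (h : v ⬝ᵥ w ≠ 0) :
    v ≠ 0 := by
  rintro rfl
  simp at h

lemma cross_ne_zero_of_dotProduct_eq_zero {a b : Fin 3 → ℝ} (ha : a ≠ 0) (hb : b ≠ 0)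
    (hab : a ⬝ᵥ b = 0) : a ⨯₃ b ≠ 0 := by
  intro h
  have := cross_dot_cross a b a b
  rw [h, hab, zero_dotProduct] at this
  rcases mul_eq_zero.1 (by linarith : a ⬝ᵥ a * (b ⬝ᵥ b) = 0) with h' | h'
  · exact ha (dotProduct_self_eq_zero.1 h')
  · exact hb (dotProduct_self_eq_zero.1 h')

lemma dotProduct_self_nonneg {n : Type*} [Fintype n] (v : n → ℝ) : 0 ≤ v ⬝ᵥ v := by
  simpa using dotProduct_star_self_nonneg v

lemma dotProduct_self_pos {n : Type*} [Fintype n] {v : n → ℝ} (hv : v ≠ 0) : 0 < v ⬝ᵥ v :=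
  lt_of_le_of_ne (dotProduct_self_nonneg v)
    (Ne.symm (dotProduct_self_eq_zero.not.2 hv))

lemma exists_dotProduct_self_eq {X Z : Fin 3 → ℝ} (hX : X ≠ 0) (hZ : Z ≠ 0) (hXZ : X ⬝ᵥ Z = 0)
    {s : ℝ} (hs : 0 ≤ s) : ∃ W, X ⬝ᵥ W = 0 ∧ Z ⬝ᵥ W = 0 ∧ W ⬝ᵥ W = s := by
  set c := (X ⨯₃ Z) ⬝ᵥ (X ⨯₃ Z)
  have hc : 0 < c := dotProduct_self_pos (cross_ne_zero_of_dotProduct_eq_zero hX hZ hXZ)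
  refine ⟨Real.sqrt (s / c) • X ⨯₃ Z, ?_, ?_, ?_⟩
  · rw [dotProduct_smul, dot_self_cross, smul_zero]
  · rw [dotProduct_smul, dot_cross_self, smul_zero]
  · rw [smul_dotProduct, dotProduct_smul, smul_eq_mul, smul_eq_mul, ← mul_assoc,
      Real.mul_self_sqrt (by positivity), div_mul_cancel₀ _ hc.ne']

namespace IsKSColoring

variable {g : (Fin 3 → ℝ) → ℝ} (hg : IsKSColoring g)
include hg

lemma add_add_eq_one {a b c : Fin 3 → ℝ} (ha : a ≠ 0) (hb : b ≠ 0) (hc : c ≠ 0)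
    (hab : a ⬝ᵥ b = 0) (hac : a ⬝ᵥ c = 0) (hbc : b ⬝ᵥ c = 0) : g a + g b + g c = 1 := by
  have h := hg.sum_eq_one ![a, b, c] (by simp [Fin.forall_fin_succ, ha, hb, hc]) <| by
    intro i j hij
    fin_cases i <;> fin_cases j <;> simp_all [dotProduct_comm]
  simpa [Fin.sum_univ_three] using h

lemma nonneg {a : Fin 3 → ℝ} (ha : a ≠ 0) : 0 ≤ g a := by
  rcases hg.eq_zero_or_eq_one a ha with h | h <;> simp [h]

lemma add_add_cross_eq_one {a b : Fin 3 → ℝ} (ha : a ≠ 0) (hb : b ≠ 0) (hab : a ⬝ᵥ b = 0) :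
    g a + g b + g (a ⨯₃ b) = 1 :=
  hg.add_add_eq_one ha hb (cross_ne_zero_of_dotProduct_eq_zero ha hb hab) hab
    (dot_self_cross a b) (dot_cross_self a b)

lemma eq_zero_of_dotProduct_eq_zero {a b : Fin 3 → ℝ} (ha : a ≠ 0) (hb : b ≠ 0)
    (hab : a ⬝ᵥ b = 0) (hga : g a = 1) : g b = 0 := by
  linarith [hg.add_add_cross_eq_one ha hb hab, hg.nonneg hb,
    hg.nonneg (cross_ne_zero_of_dotProduct_eq_zero ha hb hab)]

lemma map_smul {a : Fin 3 → ℝ} (ha : a ≠ 0) {c : ℝ} (hc : c ≠ 0) : g (c • a) = g a := by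
  obtain ⟨b, hb, hba⟩ := exists_ne_zero_dotProduct_eq_zero a
  have hab : a ⬝ᵥ b = 0 := by rwa [dotProduct_comm]
  have := hg.add_add_eq_one (smul_ne_zero hc ha) hb
    (cross_ne_zero_of_dotProduct_eq_zero ha hb hab) (by simp [hab]) (by simp) (dot_cross_self a b)
  linarith [hg.add_add_cross_eq_one ha hb hab]

lemma eq_one_of_smul_add_eq_zero {X Z W : Fin 3 → ℝ} (hX : X ≠ 0) (hZ : Z ≠ 0) (hW : W ≠ 0)
    (hXZ : X ⬝ᵥ Z = 0) (hXW : X ⬝ᵥ W = 0) (hZW : Z ⬝ᵥ W = 0) {μ : ℝ} (hμ : μ ≠ 0)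
    (hgX : g X = 1) (hgY : g (μ • (X + Z)) = 0) :
    g ((X ⬝ᵥ X) • (W + Z) - (W ⬝ᵥ W + Z ⬝ᵥ Z) • X) = 1 := by
  have hx := dotProduct_self_pos hX
  have hz := dotProduct_self_pos hZ
  have hw := dotProduct_self_pos hW
  have hZX : Z ⬝ᵥ X = 0 := by rwa [dotProduct_comm]
  have hWX : W ⬝ᵥ X = 0 := by rwa [dotProduct_comm]
  have hWZ : W ⬝ᵥ Z = 0 := by rwa [dotProduct_comm]
  set Y := μ • (X + Z)
  set n₀ := (X ⬝ᵥ X) • Z - (Z ⬝ᵥ Z) • X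
  set Y' := X + Z + W
  set A := (Z ⬝ᵥ Z) • W - (W ⬝ᵥ W) • Z
  set N := (X ⬝ᵥ X) • (W + Z) - (W ⬝ᵥ W + Z ⬝ᵥ Z) • X
  have hY : Y ≠ 0 := ne_zero_of_dotProduct_ne_zero (w := X) <| by
    simp [Y, add_dotProduct, hZX, hμ, hx.ne']
  have hn₀ : n₀ ≠ 0 := ne_zero_of_dotProduct_ne_zero (w := Z) <| by
    simp [n₀, sub_dotProduct, hXZ, hx.ne', hz.ne']
  have hY' : Y' ≠ 0 := ne_zero_of_dotProduct_ne_zero (w := X) <| by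
    simp [Y', add_dotProduct, hZX, hWX, hx.ne']
  have hA : A ≠ 0 := ne_zero_of_dotProduct_ne_zero (w := W) <| by
    simp [A, sub_dotProduct, hZW, hz.ne', hw.ne']
  have hN : N ≠ 0 := ne_zero_of_dotProduct_ne_zero (w := X) <| by
    simp [N, sub_dotProduct, add_dotProduct, hZX, hWX, hx.ne']
    positivity
  have hgW : g W = 0 := hg.eq_zero_of_dotProduct_eq_zero hX hW hXW hgX
  have hgn₀ : g n₀ = 1 := by
    have := hg.add_add_eq_one hY hW hn₀ (by simp [Y, add_dotProduct, hXW, hZW])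
      (by simp [Y, n₀, add_dotProduct, dotProduct_sub, hXZ, hZX]; ring)
      (by simp [n₀, dotProduct_sub, hWX, hWZ])
    linarith
  have hgY' : g Y' = 0 := hg.eq_zero_of_dotProduct_eq_zero hn₀ hY'
    (by simp [Y', n₀, dotProduct_add, sub_dotProduct, hXZ, hZX, hXW, hZW]; ring) hgn₀
  have hgA : g A = 0 := hg.eq_zero_of_dotProduct_eq_zero hX hA
    (by simp [A, dotProduct_sub, hXW, hXZ]) hgX
  have := hg.add_add_eq_one hY' hA hN
    (by simp [Y', A, add_dotProduct, dotProduct_sub, hXW, hXZ, hZW, hWZ]; ring)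
    (by simp [Y', N, add_dotProduct, dotProduct_add, dotProduct_sub, hXW, hXZ, hZW, hWZ,
      hZX, hWX]; ring)
    (by simp [A, N, sub_dotProduct, dotProduct_add, dotProduct_sub, hZW, hWZ, hZX, hWX]; ring)
  linarith

lemma apply_smul_add_eq_one {X Z : Fin 3 → ℝ} (hX : X ≠ 0) (hZ : Z ≠ 0) (hXZ : X ⬝ᵥ Z = 0)
    (hclose : 8 * (Z ⬝ᵥ Z) ≤ X ⬝ᵥ X) {μ : ℝ} (hμ : μ ≠ 0) (hgX : g X = 1) :
    g (μ • (X + Z)) = 1 := by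
  have hY : μ • (X + Z) ≠ 0 := ne_zero_of_dotProduct_ne_zero (w := X) <| by
    simp [add_dotProduct, dotProduct_comm Z, hXZ, hμ, hX]
  refine (hg.eq_zero_or_eq_one _ hY).resolve_left fun hgY => ?_
  set x := X ⬝ᵥ X
  set z := Z ⬝ᵥ Z
  have hx : 0 < x := dotProduct_self_pos hX
  have hz : 0 < z := dotProduct_self_pos hZ
  -- the discriminant of `(s + z)² = x (s - z)` is `x² - 8 x z`
  set s := (x - 2 * z + Real.sqrt (x ^ 2 - 8 * x * z)) / 2
  have hs : 0 < s := by
    have := Real.sqrt_nonneg (x ^ 2 - 8 * x * z)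
    simp only [s]; linarith
  have hs_root : (s + z) ^ 2 = x * (s - z) := by
    have := Real.sq_sqrt (by nlinarith : 0 ≤ x ^ 2 - 8 * x * z)
    simp only [s]; linear_combination this / 4
  obtain ⟨W, hXW, hZW, hWW⟩ := exists_dotProduct_self_eq hX hZ hXZ hs.le
  have hW : W ≠ 0 := by rintro rfl; simp at hWW; linarith
  have hN : ∀ V, X ⬝ᵥ V = 0 → x • (V + Z) - (V ⬝ᵥ V + z) • X ≠ 0 := fun V hXV =>
    ne_zero_of_dotProduct_ne_zero (w := X) <| by
      simp [sub_dotProduct, add_dotProduct, dotProduct_comm V, dotProduct_comm Z, hXV, hXZ]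
      exact ⟨by linarith [dotProduct_self_nonneg V], hX⟩
  have hplus := hg.eq_one_of_smul_add_eq_zero hX hZ hW hXZ hXW hZW hμ hgX hgY
  have hminus := hg.eq_one_of_smul_add_eq_zero hX hZ (neg_ne_zero.2 hW) hXZ (by simp [hXW])
    (by simp [hZW]) hμ hgX hgY
  have := hg.eq_zero_of_dotProduct_eq_zero (hN W hXW) (hN (-W) (by simp [hXW])) ?_ hplus
  · linarith
  · have hZX : Z ⬝ᵥ X = 0 := by rwa [dotProduct_comm]
    have hWX : W ⬝ᵥ X = 0 := by rwa [dotProduct_comm]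
    have hWZ : W ⬝ᵥ Z = 0 := by rwa [dotProduct_comm]
    simp [sub_dotProduct, dotProduct_sub, add_dotProduct, dotProduct_add, hXW, hXZ, hZW, hZX,
      hWX, hWZ, hWW]
    linear_combination x * hs_root

lemma eq_one_of_near {X Y : Fin 3 → ℝ} (hX : X ≠ 0) (hY : Y ≠ 0)
    (hnear : 8 * ((X ⬝ᵥ X) * (Y ⬝ᵥ Y)) ≤ 9 * (X ⬝ᵥ Y) ^ 2) (hgX : g X = 1) : g Y = 1 := by
  set x := X ⬝ᵥ X with hx_def
  set y := Y ⬝ᵥ Y with hy_def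
  set c := X ⬝ᵥ Y with hc_def
  have hx : 0 < x := dotProduct_self_pos hX
  have hy : 0 < y := dotProduct_self_pos hY
  have hc : c ≠ 0 := by rintro hc; rw [hc] at hnear; nlinarith
  set μ := c / x
  have hμ : μ ≠ 0 := div_ne_zero hc hx.ne'
  set Z := μ⁻¹ • Y - X
  have hYZ : Y = μ • (X + Z) := by simp [Z, smul_smul, hμ]
  have hXZ : X ⬝ᵥ Z = 0 := by
    simp only [Z, dotProduct_sub, dotProduct_smul, smul_eq_mul, ← hx_def, ← hc_def, μ]
    field_simp
    ring
  rw [hYZ]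
  by_cases hZ : Z = 0
  · rw [hZ, add_zero, hg.map_smul hX hμ, hgX]
  refine hg.apply_smul_add_eq_one hX hZ hXZ ?_ hμ hgX
  have hZZ : Z ⬝ᵥ Z = x ^ 2 * y / c ^ 2 - x := by
    have hYX : Y ⬝ᵥ X = c := dotProduct_comm _ _
    simp only [Z, dotProduct_sub, sub_dotProduct, dotProduct_smul, smul_dotProduct, smul_eq_mul,
      hYX, ← hx_def, ← hy_def, ← hc_def, μ]
    field_simp
    ring
  rw [hZZ, mul_sub, sub_le_iff_le_add, mul_div_assoc', div_le_iff₀ (by positivity)]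
  nlinarith

lemma eq_one_of_dotProduct_eq_zero {X Z : Fin 3 → ℝ} (hX : X ≠ 0) (hXZ : X ⬝ᵥ Z = 0)
    (hZZ : Z ⬝ᵥ Z = X ⬝ᵥ X) (hgX : g X = 1) : g Z = 1 := by
  set x := X ⬝ᵥ X with hx_def
  have hx : 0 < x := dotProduct_self_pos hX
  have hdot : ∀ a b c d : ℝ, (a • X + b • Z) ⬝ᵥ (c • X + d • Z) = (a * c + b * d) * x := by
    intro a b c d
    have hZX : Z ⬝ᵥ X = 0 := by rwa [dotProduct_comm]
    simp only [add_dotProduct, dotProduct_add, smul_dotProduct, dotProduct_smul, smul_eq_mul,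
      hXZ, hZX, hZZ, ← hx_def]
    ring
  have hne : ∀ a b : ℝ, a + b ≠ 0 → a • X + b • Z ≠ 0 := fun a b hab =>
    ne_zero_of_dotProduct_ne_zero (w := (1 : ℝ) • X + (1 : ℝ) • Z) <| by
      rw [hdot]; simpa using mul_ne_zero hab hx.ne'
  -- consecutive points of the walk `(6 - m) • X + m • Z` have `cos² ≥ 8 / 9`
  have hstep : ∀ t : ℝ,
      8 * (((6 - t) * (6 - t) + t * t) * ((6 - (t + 1)) * (6 - (t + 1)) + (t + 1) * (t + 1))) ≤
        9 * ((6 - t) * (6 - (t + 1)) + t * (t + 1)) ^ 2 := fun t => by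
    nlinarith [sq_nonneg (2 * t - 5), sq_nonneg ((2 * t - 5) ^ 2)]
  have hwalk : ∀ m : ℕ, m ≤ 6 → g ((6 - m : ℝ) • X + (m : ℝ) • Z) = 1 := by
    intro m hm
    induction m with
    | zero => simpa [hg.map_smul hX] using hgX
    | succ m ih =>
      refine hg.eq_one_of_near (hne _ _ (by norm_num)) (hne _ _ (by norm_num)) ?_
        (ih (by omega))
      rw [hdot, hdot, hdot]
      push_cast
      linear_combination mul_le_mul_of_nonneg_right (hstep m) (sq_nonneg x)
  simpa [hg.map_smul (ne_zero_of_dotProduct_ne_zero (w := Z) (hZZ ▸ hx.ne'))] using hwalk 6 le_rfl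

end IsKSColoring

theorem not_isKSColoring (g : (Fin 3 → ℝ) → ℝ) : ¬ IsKSColoring g := by
  intro hg
  set e : Fin 3 → Fin 3 → ℝ := fun i => Pi.single i 1
  have he : ∀ i, e i ≠ 0 := fun i => by simp [e]
  have he_orth : Pairwise fun i j => e i ⬝ᵥ e j = 0 := fun i j hij => by
    simp [e, hij.symm]
  obtain ⟨i, hi⟩ : ∃ i, g (e i) = 1 := by
    by_contra! h
    have := hg.sum_eq_one e he he_orth
    simp [fun i => (hg.eq_zero_or_eq_one _ (he i)).resolve_right (h i)] at this
  have hij : i ≠ i + 1 := by simp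
  have h₁ := hg.eq_one_of_dotProduct_eq_zero (he i) (he_orth hij) (by simp [e]) hi
  have h₀ := hg.eq_zero_of_dotProduct_eq_zero (he i) (he (i + 1)) (he_orth hij) hi
  linarith

lemma mul_sum_eq_zero_of_pairwise {α ι : Type*} [NonUnitalNonAssocSemiring α] {P : ι → α}
    (horth : Pairwise fun i j => P i * P j = 0) {s : Finset ι} {i : ι} (hi : i ∉ s) :
    P i * ∑ j ∈ s, P j = 0 := by
  rw [Finset.mul_sum]
  exact Finset.sum_eq_zero fun j hj => horth (ne_of_mem_of_not_mem hj hi).symm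

namespace IsProjector

variable {d : ℕ} {P Q : Matrix (Fin d) (Fin d) ℂ}

lemma mul_eq_zero_comm (hP : IsProjector P) (hQ : IsProjector Q) (h : P * Q = 0) :
    Q * P = 0 := by
  simpa [hP.2, hQ.2] using congrArg conjTranspose h

lemma add (hP : IsProjector P) (hQ : IsProjector Q) (h : P * Q = 0) :
    IsProjector (P + Q) := by
  refine ⟨?_, by rw [conjTranspose_add, hP.2, hQ.2]⟩
  rw [add_mul, mul_add, mul_add, hP.1, hQ.1, h, hP.mul_eq_zero_comm hQ h, add_zero, zero_add]

lemma sum {ι : Type*} {P : ι → Matrix (Fin d) (Fin d) ℂ} (hP : ∀ i, IsProjector (P i))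
    (horth : Pairwise fun i j => P i * P j = 0) (s : Finset ι) : IsProjector (∑ i ∈ s, P i) := by
  classical
  induction s using Finset.induction_on with
  | empty => simp [IsProjector]
  | insert i s hi ih =>
    rw [Finset.sum_insert hi]
    exact (hP i).add ih (mul_sum_eq_zero_of_pairwise horth hi)

end IsProjector

namespace IsZeroDet

variable {d : ℕ} {L R : Matrix (Fin d) (Fin d) ℂ → ℝ} (hZ : IsZeroDet L R)
include hZ

lemma eq_zero_or_eq_one {P : Matrix (Fin d) (Fin d) ℂ} (hP : IsProjector P) :
    L P = 0 ∨ L P = 1 :=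
  (hZ P hP).imp And.left And.left

lemma left_eq_right {P : Matrix (Fin d) (Fin d) ℂ} (hP : IsProjector P) : L P = R P := by
  rcases hZ P hP with ⟨hL, hR⟩ | ⟨hL, hR⟩ <;> rw [hL, hR]

lemma map_add (hQ : IsQIVPM L R) {P Q : Matrix (Fin d) (Fin d) ℂ} (hP : IsProjector P)
    (hQ' : IsProjector Q) (h : P * Q = 0) : L (P + Q) = L P + L Q := by
  obtain ⟨-, ⟨hL0, hR0⟩, -, -, hconv⟩ := hQ
  have := hconv P Q hP hQ' (by rw [h, hP.mul_eq_zero_comm hQ' h])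
  rw [h, sub_zero, hL0, hR0, add_zero, add_zero] at this
  linarith [this.1, this.2, hZ.left_eq_right hP, hZ.left_eq_right hQ',
    hZ.left_eq_right (hP.add hQ' h)]

lemma map_sum (hQ : IsQIVPM L R) {ι : Type*} {P : ι → Matrix (Fin d) (Fin d) ℂ}
    (hP : ∀ i, IsProjector (P i)) (horth : Pairwise fun i j => P i * P j = 0) (s : Finset ι) :
    L (∑ i ∈ s, P i) = ∑ i ∈ s, L (P i) := by
  classical
  induction s using Finset.induction_on with
  | empty => simpa using hQ.2.1.1
  | insert i s hi ih =>
    rw [Finset.sum_insert hi, Finset.sum_insert hi, ← ih]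
    exact hZ.map_add hQ (hP i) (IsProjector.sum hP horth s) (mul_sum_eq_zero_of_pairwise horth hi)

lemma exists_single_eq_one (hQ : IsQIVPM L R) : ∃ k, L (single k k 1) = 1 := by
  have hP : ∀ k : Fin d, IsProjector (single k k (1 : ℂ)) := fun k =>
    ⟨by simp, by simp [conjTranspose_single]⟩
  have horth : Pairwise fun i j : Fin d => single i i (1 : ℂ) * single j j 1 = 0 :=
    fun i j hij => by simp [hij]
  have hsum := hZ.map_sum hQ hP horth Finset.univ
  rw [sum_single_one, hQ.2.2.1.1] at hsum
  by_contra! h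
  simp [fun k => (hZ.eq_zero_or_eq_one (hP k)).resolve_right (h k)] at hsum

end IsZeroDet

noncomputable def lineProj {n : Type*} [Fintype n] (a : n → ℝ) : Matrix n n ℝ :=
  (a ⬝ᵥ a)⁻¹ • vecMulVec a a

section lineProj

variable {n : Type*} [Fintype n]

lemma lineProj_mul_lineProj (a b : n → ℝ) :
    lineProj a * lineProj b = ((a ⬝ᵥ a)⁻¹ * (b ⬝ᵥ b)⁻¹ * (a ⬝ᵥ b)) • vecMulVec a b := by
  simp only [lineProj, smul_mul_smul_comm, vecMulVec_mul_vecMulVec, vecMulVec_smul, smul_smul]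

lemma lineProj_mul_self {a : n → ℝ} (ha : a ⬝ᵥ a ≠ 0) : lineProj a * lineProj a = lineProj a := by
  rw [lineProj_mul_lineProj, inv_mul_cancel_right₀ ha, lineProj]

lemma lineProj_mul_eq_zero {a b : n → ℝ} (hab : a ⬝ᵥ b = 0) : lineProj a * lineProj b = 0 := by
  rw [lineProj_mul_lineProj, hab, mul_zero, zero_smul]

lemma transpose_lineProj (a : n → ℝ) : (lineProj a)ᵀ = lineProj a := by
  rw [lineProj, transpose_smul, transpose_vecMulVec]

lemma lineProj_single [DecidableEq n] (i : n) : lineProj (Pi.single i 1) = single i i 1 := by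
  simp [lineProj, single_eq_single_vecMulVec_single]

lemma sum_lineProj_eq_one [DecidableEq n] {u : n → n → ℝ}
    (hu : ∀ i, u i ⬝ᵥ u i ≠ 0) (horth : Pairwise fun i j => u i ⬝ᵥ u j = 0) :
    ∑ i, lineProj (u i) = 1 := by
  set N : Matrix n n ℝ := Matrix.of u
  have hN : N * Nᵀ = diagonal fun i => u i ⬝ᵥ u i := by
    ext i j
    rw [mul_apply', diagonal_apply]
    split_ifs with h
    · subst h; rfl
    · exact horth h
  have h : (Nᵀ * diagonal fun i => (u i ⬝ᵥ u i)⁻¹) * N = 1 := by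
    rw [mul_eq_one_comm, ← Matrix.mul_assoc, hN, diagonal_mul_diagonal]
    simp [hu]
  rw [← h]
  ext j k
  rw [mul_apply]
  simp only [lineProj, Matrix.sum_apply, Matrix.smul_apply, vecMulVec_apply, smul_eq_mul,
    mul_diagonal, transpose_apply, N, of_apply]
  exact Finset.sum_congr rfl fun i _ => by ring

end lineProj

noncomputable def conjOfReal {d n : ℕ} (E : Matrix (Fin d) (Fin n) ℂ)
    (A : Matrix (Fin n) (Fin n) ℝ) : Matrix (Fin d) (Fin d) ℂ :=
  E * Complex.ofRealHom.mapMatrix A * Eᴴ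

section conjOfReal

variable {d n : ℕ} {E : Matrix (Fin d) (Fin n) ℂ}

lemma conjOfReal_mul_conjOfReal (hE : Eᴴ * E = 1) (A B : Matrix (Fin n) (Fin n) ℝ) :
    conjOfReal E A * conjOfReal E B = conjOfReal E (A * B) := by
  simp only [conjOfReal, Matrix.mul_assoc, map_mul]
  rw [← Matrix.mul_assoc Eᴴ, hE, Matrix.one_mul]

lemma conjTranspose_conjOfReal (A : Matrix (Fin n) (Fin n) ℝ) :
    (conjOfReal E A)ᴴ = conjOfReal E Aᵀ := by
  have : (Complex.ofRealHom.mapMatrix A)ᴴ = Complex.ofRealHom.mapMatrix Aᵀ := by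
    ext; simp
  rw [conjOfReal, conjOfReal, conjTranspose_mul, conjTranspose_mul, conjTranspose_conjTranspose,
    this, Matrix.mul_assoc]

lemma sum_conjOfReal {ι : Type*} (s : Finset ι) (A : ι → Matrix (Fin n) (Fin n) ℝ) :
    ∑ i ∈ s, conjOfReal E (A i) = conjOfReal E (∑ i ∈ s, A i) := by
  simp only [conjOfReal, map_sum, Matrix.mul_sum, Matrix.sum_mul]

lemma isProjector_conjOfReal (hE : Eᴴ * E = 1) {A : Matrix (Fin n) (Fin n) ℝ} (hA : A * A = A)
    (hAt : Aᵀ = A) : IsProjector (conjOfReal E A) :=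
  ⟨by rw [conjOfReal_mul_conjOfReal hE, hA], by rw [conjTranspose_conjOfReal, hAt]⟩

lemma conjOfReal_submatrix_single {f : Fin n → Fin d} (i : Fin n) :
    conjOfReal ((1 : Matrix (Fin d) (Fin d) ℂ).submatrix id f) (single i i 1) =
      single (f i) (f i) 1 := by
  ext a b
  simp [conjOfReal, mul_apply, single_apply, one_apply, ite_and, eq_comm (a := i)]
  rw [Finset.sum_eq_single i (fun x _ hx => by simp [hx]) (by simp)]
  grind

end conjOfReal

lemma IsZeroDet.isKSColoring {d : ℕ} {L R : Matrix (Fin d) (Fin d) ℂ → ℝ} (hZ : IsZeroDet L R)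
    (hQ : IsQIVPM L R) {E : Matrix (Fin d) (Fin 3) ℂ} (hE : Eᴴ * E = 1)
    (hE₀ : L (conjOfReal E (lineProj (Pi.single 0 1))) = 1) :
    IsKSColoring fun a => L (conjOfReal E (lineProj a)) := by
  have hP : ∀ a : Fin 3 → ℝ, a ≠ 0 → IsProjector (conjOfReal E (lineProj a)) := fun a ha =>
    isProjector_conjOfReal hE (lineProj_mul_self (dotProduct_self_pos ha).ne')
      (transpose_lineProj a)
  have hframe : ∀ u : Fin 3 → Fin 3 → ℝ, (∀ i, u i ≠ 0) → Pairwise (fun i j => u i ⬝ᵥ u j = 0) →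
      ∑ i, L (conjOfReal E (lineProj (u i))) = L (conjOfReal E 1) := by
    intro u hu horth
    have horth' : Pairwise fun i j =>
        conjOfReal E (lineProj (u i)) * conjOfReal E (lineProj (u j)) = 0 := fun i j hij => by
      dsimp only
      rw [conjOfReal_mul_conjOfReal hE, lineProj_mul_eq_zero (horth hij)]
      simp [conjOfReal]
    rw [← hZ.map_sum hQ (fun i => hP _ (hu i)) horth', sum_conjOfReal,
      sum_lineProj_eq_one (fun i => (dotProduct_self_pos (hu i)).ne') horth]
  have hone : L (conjOfReal E 1) = 1 := by
    have hE1 : IsProjector (conjOfReal E 1) :=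
      isProjector_conjOfReal hE (Matrix.mul_one 1) transpose_one
    have he : ∀ i : Fin 3, (Pi.single i 1 : Fin 3 → ℝ) ≠ 0 := fun i => by simp
    have hsum := hframe (fun i => Pi.single i 1) he fun i j hij => by simp [hij.symm]
    rw [Fin.sum_univ_three, hE₀] at hsum
    linarith [(hQ.1 _ hE1).2.1, (hQ.1 _ hE1).2.2, (hQ.1 _ (hP _ (he 1))).1,
      (hQ.1 _ (hP _ (he 2))).1]
  exact ⟨fun a ha => hZ.eq_zero_or_eq_one (hP a ha),
    fun u hu horth => (hframe u hu horth).trans hone⟩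

/-- 0-deterministic variant of the Kochen–Specker theorem: for `d ≥ 3` there is
no 0-deterministic QIVPM on `ℂ^d`. -/
theorem kochenSpecker_zeroDeterministic : ∀ d : ℕ, 3 ≤ d →
    ¬ ∃ L R : Matrix (Fin d) (Fin d) ℂ → ℝ, IsQIVPM L R ∧ IsZeroDet L R := by
  rintro d hd ⟨L, R, hQ, hZ⟩
  obtain ⟨k, hk⟩ := hZ.exists_single_eq_one hQ
  set f : Fin 3 ↪ Fin d := (Fin.castLEEmb hd).trans (Equiv.swap (Fin.castLE hd 0) k).toEmbedding
  have hf : f 0 = k := by simp [f]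
  set E := (1 : Matrix (Fin d) (Fin d) ℂ).submatrix id f
  have hE : Eᴴ * E = 1 := by
    rw [conjTranspose_submatrix, conjTranspose_one,
      ← submatrix_mul _ _ _ _ _ Function.bijective_id, Matrix.one_mul, submatrix_one_embedding]
  refine not_isKSColoring _ (hZ.isKSColoring hQ hE ?_)
  rwa [lineProj_single, conjOfReal_submatrix_single, hf]
end

section
/- Let d ≥ 3, let 0 ≤ δ < 1/3, and let (L, R) be a δ-deterministic QIVPM on ℂ^d. Define L^D and R^D on projectors by L^D P = R^D P = 0 whenever R P ≤ δ and L^D P = R^D P = 1 whenever L P ≥ 1 − δ. Then these two cases are mutually exclusive and exhaust all projectors, and (L^D, R^D) is a 0-deterministic QIVPM on ℂ^d. -/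
open Matrix
open scoped ComplexOrder

/-!
Both endpoints of the interval of a projector lie within `δ` of the same bit `0` or `1`, and
`(L^D, R^D)` is that bit. Rounding to the nearest bit preserves the QIVPM axioms: the complement
law because rounding commutes with `x ↦ 1 - x`, and the two convexity inequalities because, for
`δ < 1/3`, an inequality between sums of two values near bits forces the same inequality between
the sums of the bits.
-/

lemma isProjector_iff_isStarProjection {d : ℕ} {P : Matrix (Fin d) (Fin d) ℂ} :
    IsProjector P ↔ IsStarProjection P := by
  rw [isStarProjection_iff', star_eq_conjTranspose]
  rfl

namespace IsProjector

variable {d : ℕ} {P Q : Matrix (Fin d) (Fin d) ℂ}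

lemma zero : IsProjector (0 : Matrix (Fin d) (Fin d) ℂ) :=
  isProjector_iff_isStarProjection.2 (.zero _)

lemma one : IsProjector (1 : Matrix (Fin d) (Fin d) ℂ) :=
  isProjector_iff_isStarProjection.2 (.one _)

lemma one_sub (hP : IsProjector P) : IsProjector (1 - P) :=
  isProjector_iff_isStarProjection.2 (isProjector_iff_isStarProjection.1 hP).one_sub

lemma mul_of_commute (hP : IsProjector P) (hQ : IsProjector Q) (hPQ : P * Q = Q * P) :
    IsProjector (P * Q) :=
  isProjector_iff_isStarProjection.2 <|
    (isProjector_iff_isStarProjection.1 hP).mul (isProjector_iff_isStarProjection.1 hQ) hPQ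

lemma add_sub_mul_of_commute (hP : IsProjector P) (hQ : IsProjector Q) (hPQ : P * Q = Q * P) :
    IsProjector (P + Q - P * Q) :=
  isProjector_iff_isStarProjection.2 <|
    (isProjector_iff_isStarProjection.1 hP).add_sub_mul_of_commute hPQ
      (isProjector_iff_isStarProjection.1 hQ)

end IsProjector

def RoundsTo (δ x b : ℝ) : Prop :=
  (b = 0 ∧ 0 ≤ x ∧ x ≤ δ) ∨ (b = 1 ∧ 1 - δ ≤ x ∧ x ≤ 1)

namespace RoundsTo

variable {δ x b : ℝ}

lemma eq_zero_or_eq_one (h : RoundsTo δ x b) : b = 0 ∨ b = 1 := by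
  rcases h with ⟨rfl, -⟩ | ⟨rfl, -⟩ <;> simp

lemma eq_zero_of_lt (h : RoundsTo δ x b) (hx : x < 1 - δ) : b = 0 := by
  rcases h with ⟨rfl, -⟩ | ⟨-, h, -⟩
  · rfl
  · linarith

lemma eq_one_of_lt (h : RoundsTo δ x b) (hx : δ < x) : b = 1 := by
  rcases h with ⟨-, -, h⟩ | ⟨rfl, -⟩
  · linarith
  · rfl

lemma unique {c : ℝ} (hδ : δ < 1 / 2) (hb : RoundsTo δ x b) (hc : RoundsTo δ x c) :
    b = c := by
  rcases hb with ⟨rfl, -, hx⟩ | ⟨rfl, hx, -⟩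
  · exact (hc.eq_zero_of_lt (by linarith)).symm
  · exact (hc.eq_one_of_lt (by linarith)).symm

lemma one_sub (h : RoundsTo δ x b) : RoundsTo δ (1 - x) (1 - b) := by
  rcases h with ⟨rfl, h₀, h₁⟩ | ⟨rfl, h₀, h₁⟩
  · right; exact ⟨by ring, by linarith, by linarith⟩
  · left; exact ⟨by ring, by linarith, by linarith⟩

/- Two values rounding to `1` sum to at least `2 - 2δ`, while a `1` and a `0` sum to at most
`1 + δ`: the threshold `1/3` is exactly where these ranges separate. -/
lemma add_le_add {x' y y' b' c c' : ℝ} (hδ : δ < 1 / 3)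
    (hx : RoundsTo δ x b) (hx' : RoundsTo δ x' b')
    (hy : RoundsTo δ y c) (hy' : RoundsTo δ y' c')
    (h : x + x' ≤ y + y') : b + b' ≤ c + c' := by
  rcases hx with ⟨rfl, _⟩ | ⟨rfl, _⟩ <;> rcases hx' with ⟨rfl, _⟩ | ⟨rfl, _⟩ <;>
    rcases hy with ⟨rfl, _⟩ | ⟨rfl, _⟩ <;> rcases hy' with ⟨rfl, _⟩ | ⟨rfl, _⟩ <;>
    linarith

end RoundsTo

section Rounding

variable {d : ℕ} {δ : ℝ} {L R LD RD : Matrix (Fin d) (Fin d) ℂ → ℝ}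

def IsRounding (δ : ℝ) (L R LD RD : Matrix (Fin d) (Fin d) ℂ → ℝ) : Prop :=
  ∀ P, IsProjector P → RD P = LD P ∧ RoundsTo δ (L P) (LD P) ∧ RoundsTo δ (R P) (LD P)

lemma IsQIVPM.not_le_and_le (hQ : IsQIVPM L R) (hδ : δ < 1 / 2)
    {P : Matrix (Fin d) (Fin d) ℂ} (hP : IsProjector P) : ¬ (R P ≤ δ ∧ 1 - δ ≤ L P) := by
  rintro ⟨hR, hL⟩
  linarith [(hQ.1 P hP).2.1]

lemma IsQIVPM.isRounding (hQ : IsQIVPM L R) (hdet : IsDeltaDet δ L R)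
    (hD0 : ∀ P, IsProjector P → R P ≤ δ → LD P = 0 ∧ RD P = 0)
    (hD1 : ∀ P, IsProjector P → 1 - δ ≤ L P → LD P = 1 ∧ RD P = 1) :
    IsRounding δ L R LD RD := by
  intro P hP
  obtain ⟨hL0, hLR, hR1⟩ := hQ.1 P hP
  rcases hdet P hP with hR | hL
  · obtain ⟨hLD, hRD⟩ := hD0 P hP hR
    rw [hLD, hRD]
    exact ⟨rfl, .inl ⟨rfl, hL0, hLR.trans hR⟩, .inl ⟨rfl, hL0.trans hLR, hR⟩⟩
  · obtain ⟨hLD, hRD⟩ := hD1 P hP hL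
    rw [hLD, hRD]
    exact ⟨rfl, .inr ⟨rfl, hL, hLR.trans hR1⟩, .inr ⟨rfl, hL.trans hLR, hR1⟩⟩

lemma IsRounding.isZeroDet (h : IsRounding δ L R LD RD) : IsZeroDet LD RD := by
  intro P hP
  obtain ⟨hRD, hL, -⟩ := h P hP
  rw [hRD]
  rcases hL.eq_zero_or_eq_one with h | h <;> simp [h]

lemma IsRounding.isQIVPM (h : IsRounding δ L R LD RD) (hQ : IsQIVPM L R) (hδ : δ < 1 / 3) :
    IsQIVPM LD RD := by
  obtain ⟨-, ⟨hL0, -⟩, ⟨hL1, -⟩, hcompl, hconv⟩ := hQ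
  refine ⟨fun P hP => ?_, ?_, ?_, fun P hP => ?_, fun P₀ P₁ h₀ h₁ hcomm => ?_⟩
  · obtain ⟨hRD, hL, -⟩ := h P hP
    rw [hRD]
    rcases hL.eq_zero_or_eq_one with h | h <;> norm_num [h]
  · obtain ⟨hRD, hL, -⟩ := h 0 .zero
    have := hL.eq_zero_of_lt (by linarith)
    exact ⟨this, hRD.trans this⟩
  · obtain ⟨hRD, hL, -⟩ := h 1 .one
    have := hL.eq_one_of_lt (by linarith)
    exact ⟨this, hRD.trans this⟩
  · obtain ⟨hRD, -, hR⟩ := h P hP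
    obtain ⟨hRD', hL', -⟩ := h (1 - P) hP.one_sub
    rw [(hcompl P hP).1] at hL'
    have hLD' : 1 - LD P = LD (1 - P) := hR.one_sub.unique (by linarith) hL'
    exact ⟨by rw [← hLD', hRD], by rw [hRD', ← hLD']⟩
  · obtain ⟨hRD₀, hL₀, hR₀⟩ := h P₀ h₀
    obtain ⟨hRD₁, hL₁, hR₁⟩ := h P₁ h₁
    obtain ⟨hRDQ, hLQ, hRQ⟩ := h _ (h₀.add_sub_mul_of_commute h₁ hcomm)
    obtain ⟨hRDS, hLS, hRS⟩ := h _ (h₀.mul_of_commute h₁ hcomm)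
    obtain ⟨hconvL, hconvR⟩ := hconv P₀ P₁ h₀ h₁ hcomm
    rw [hRD₀, hRD₁, hRDQ, hRDS]
    exact ⟨hL₀.add_le_add hδ hL₁ hLQ hLS hconvL, hRQ.add_le_add hδ hRS hR₀ hR₁ hconvR⟩

end Rounding

theorem deltaDet_to_zeroDet_general (d : ℕ) (δ : ℝ) (hδ : δ < 1/3)
    (L R : Matrix (Fin d) (Fin d) ℂ → ℝ)
    (hQ : IsQIVPM L R) (hdet : IsDeltaDet δ L R)
    (LD RD : Matrix (Fin d) (Fin d) ℂ → ℝ)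
    (hD0 : ∀ P, IsProjector P → R P ≤ δ → LD P = 0 ∧ RD P = 0)
    (hD1 : ∀ P, IsProjector P → 1 - δ ≤ L P → LD P = 1 ∧ RD P = 1) :
    (∀ P, IsProjector P → ¬ (R P ≤ δ ∧ 1 - δ ≤ L P)) ∧
    (∀ P, IsProjector P → R P ≤ δ ∨ 1 - δ ≤ L P) ∧
    IsQIVPM LD RD ∧ IsZeroDet LD RD := by
  have hround := hQ.isRounding hdet hD0 hD1
  exact ⟨fun P => hQ.not_le_and_le (by linarith), hdet, hround.isQIVPM hQ hδ, hround.isZeroDet⟩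

/-- From a `δ`-deterministic QIVPM with `δ < 1/3` one obtains a 0-deterministic QIVPM
by collapsing the two (mutually exclusive and exhaustive) cases to `[0,0]` and `[1,1]`. -/
theorem deltaDet_to_zeroDet (d : ℕ) (hd : 3 ≤ d) (δ : ℝ) (hδ0 : 0 ≤ δ) (hδ : δ < 1/3)
    (L R : Matrix (Fin d) (Fin d) ℂ → ℝ)
    (hQ : IsQIVPM L R) (hdet : IsDeltaDet δ L R)
    (LD RD : Matrix (Fin d) (Fin d) ℂ → ℝ)
    (hD0 : ∀ P, IsProjector P → R P ≤ δ → LD P = 0 ∧ RD P = 0)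
    (hD1 : ∀ P, IsProjector P → 1 - δ ≤ L P → LD P = 1 ∧ RD P = 1) :
    (∀ P, IsProjector P → ¬ (R P ≤ δ ∧ 1 - δ ≤ L P)) ∧
    (∀ P, IsProjector P → R P ≤ δ ∨ 1 - δ ≤ L P) ∧
    IsQIVPM LD RD ∧ IsZeroDet LD RD :=
  deltaDet_to_zeroDet_general d δ hδ L R hQ hdet LD RD hD0 hD1
end

section
/- (Tightness of the 1/3 bound) On ℂ³, define L P = R P = Re (Matrix.trace P) / 3 for every matrix P. Then (L, R) is a QIVPM on ℂ³ (note Re (Matrix.trace P) equals the rank of the projector P, so the assigned values on projectors lie in {0, 1/3, 2/3, 1}), and this QIVPM is (1/3)-deterministic. -/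
open Matrix
open scoped ComplexOrder

theorem Matrix.trace_eq_rank_of_isIdempotentElem {K n : Type*} [Field K] [Fintype n]
    [DecidableEq n] {P : Matrix n n K} (hP : IsIdempotentElem P) :
    P.trace = P.rank := by
  have hlin : IsIdempotentElem P.toLin' := hP.map Matrix.toLinAlgEquiv'
  rw [← P.trace_toLin'_eq, (LinearMap.IsIdempotentElem.isProj_range _ hlin).trace]
  rfl

theorem IsProjector.trace_re_eq_rank {d : ℕ} {P : Matrix (Fin d) (Fin d) ℂ}
    (hP : IsProjector P) : (trace P).re = P.rank := by
  rw [trace_eq_rank_of_isIdempotentElem hP.1, Complex.natCast_re]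

/-- The normalized trace is additive, so conditions (iii) and (iv) hold with equality. -/
theorem isQIVPM_normalizedTrace {d : ℕ} (hd : d ≠ 0) :
    IsQIVPM (fun P : Matrix (Fin d) (Fin d) ℂ => (trace P).re / d)
      (fun P => (trace P).re / d) := by
  have hd_pos : (0 : ℝ) < d := by positivity
  refine ⟨fun P hP => ?_, by simp, by simp [hd_pos.ne'], fun P _ => ?_, fun P₀ P₁ _ _ _ => ?_⟩
  · have hrank : (P.rank : ℝ) ≤ d := by exact_mod_cast P.rank_le_width
    simp only [hP.trace_re_eq_rank]
    exact ⟨by positivity, le_rfl, (div_le_one hd_pos).mpr hrank⟩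
  · have hcompl : (trace (1 - P)).re / d = 1 - (trace P).re / d := by
      simp only [trace_sub, trace_one, Fintype.card_fin, Complex.sub_re, Complex.natCast_re]
      field_simp
    exact ⟨hcompl, hcompl⟩
  · have hsum : (trace (P₀ + P₁ - P₀ * P₁)).re / d + (trace (P₀ * P₁)).re / d
        = (trace P₀).re / d + (trace P₁).re / d := by
      simp only [trace_sub, trace_add, Complex.sub_re, Complex.add_re]
      ring
    exact ⟨hsum.ge, hsum.le⟩

theorem IsProjector.trace_re_div_three_mem {P : Matrix (Fin 3) (Fin 3) ℂ} (hP : IsProjector P) :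
    (trace P).re / 3 ∈ ({0, 1/3, 2/3, 1} : Set ℝ) := by
  rw [hP.trace_re_eq_rank]
  have hrank : P.rank ≤ 3 := P.rank_le_width
  interval_cases P.rank <;> norm_num

/-- Tightness of the `1/3` bound: on `ℂ³` the assignment `P ↦ [tr P / 3, tr P / 3]`
(whose value on a projector of rank `n` is `n/3`) is a `(1/3)`-deterministic QIVPM. -/
theorem oneThirdDeterministic_QIVPM_exists :
    (∀ P : Matrix (Fin 3) (Fin 3) ℂ, IsProjector P → (Matrix.trace P).re = (P.rank : ℝ)) ∧
    (∀ P : Matrix (Fin 3) (Fin 3) ℂ, IsProjector P →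
      (Matrix.trace P).re / 3 ∈ ({0, 1/3, 2/3, 1} : Set ℝ)) ∧
    IsQIVPM (fun P : Matrix (Fin 3) (Fin 3) ℂ => (Matrix.trace P).re / 3)
      (fun P : Matrix (Fin 3) (Fin 3) ℂ => (Matrix.trace P).re / 3) ∧
    IsDeltaDet (1/3) (fun P : Matrix (Fin 3) (Fin 3) ℂ => (Matrix.trace P).re / 3)
      (fun P : Matrix (Fin 3) (Fin 3) ℂ => (Matrix.trace P).re / 3) := by
  refine ⟨fun P hP => hP.trace_re_eq_rank, fun P hP => hP.trace_re_div_three_mem,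
    by exact_mod_cast isQIVPM_normalizedTrace (d := 3) (by norm_num), fun P hP => ?_⟩
  have h := hP.trace_re_div_three_mem
  simp only [Set.mem_insert_iff, Set.mem_singleton_iff] at h
  rcases h with h | h | h | h <;> simp only [h] <;> norm_num
end

section
/- (Failure of the Kochen–Specker theorem in dimension 2) There exists a 0-deterministic QIVPM on ℂ²: there is a function v : Matrix (Fin 2) (Fin 2) ℂ → ℝ taking only the values 0 and 1 on projectors such that the pair L = v, R = v is a QIVPM on ℂ². -/
/-!
In dimension two a projector is `0`, `1` or of rank one, and two commuting rank-one projectors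
are equal or complementary. Hence every `{0, 1}`-valued `v` with `v 0 = 0`, `v 1 = 1` and
`v (1 - P) = 1 - v P` satisfies the convexity axiom with equality. Such a `v` is obtained by
picking from each complementary pair `{P, 1 - P}` of rank-one projectors the member whose Bloch
vector is positive for a lexicographic order: the Bloch vector of `1 - P` is minus that of `P`.
-/

open Matrix
open scoped ComplexOrder

namespace Matrix

section Idempotent

variable {K n : Type*} [Field K] [Fintype n] [DecidableEq n] {A : Matrix n n K}

theorem trace_eq_rank_of_isIdempotentElem_s5 (hA : IsIdempotentElem A) : A.trace = A.rank := by
  have : IsIdempotentElem (toLin' A) := hA.map toLinAlgEquiv'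
  rw [← trace_toLin'_eq, (LinearMap.IsIdempotentElem.isProj_range _ this).trace, rank]
  rfl

variable [CharZero K]

theorem eq_zero_of_isIdempotentElem_of_trace_eq_zero (hA : IsIdempotentElem A)
    (h : A.trace = 0) : A = 0 := by
  rw [← toLin'.map_eq_zero_iff]
  exact LinearMap.IsIdempotentElem.eq_zero_of_trace_eq_zero (hA.map toLinAlgEquiv')
    (by rwa [← trace_toLin'_eq] at h)

theorem eq_one_of_isIdempotentElem_of_trace_eq_card (hA : IsIdempotentElem A)
    (h : A.trace = Fintype.card n) : A = 1 := by
  have := eq_zero_of_isIdempotentElem_of_trace_eq_zero hA.one_sub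
    (by rw [trace_sub, trace_one, h, sub_self])
  exact (sub_eq_zero.mp this).symm

end Idempotent

section FinTwo

variable {K : Type*} [Field K] [CharZero K] {A B : Matrix (Fin 2) (Fin 2) K}

theorem eq_zero_or_eq_one_or_trace_eq_one_of_isIdempotentElem (hA : IsIdempotentElem A) :
    A = 0 ∨ A = 1 ∨ A.trace = 1 := by
  have hrank : A.rank ≤ 2 := by simpa using A.rank_le_card_width
  have htrace := trace_eq_rank_of_isIdempotentElem_s5 hA
  interval_cases A.rank
  · exact .inl (eq_zero_of_isIdempotentElem_of_trace_eq_zero hA (by simpa using htrace))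
  · exact .inr (.inr (by simpa using htrace))
  · exact .inr (.inl (eq_one_of_isIdempotentElem_of_trace_eq_card hA (by simpa using htrace)))

theorem eq_or_eq_one_sub_of_commute (hA : IsIdempotentElem A) (hB : IsIdempotentElem B)
    (hAB : Commute A B) (htA : A.trace = 1) (htB : B.trace = 1) : B = A ∨ B = 1 - A := by
  have hAB' : Commute A (1 - B) := (Commute.one_right A).sub_right hAB
  have hA'B : Commute (1 - A) B := (Commute.one_left B).sub_left hAB
  have hA'B' : Commute (1 - A) (1 - B) := (Commute.one_right _).sub_right hA'B
  rcases eq_zero_or_eq_one_or_trace_eq_one_of_isIdempotentElem (hA.mul_of_commute hAB hB)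
    with h | h | h
  · right
    have hcompl := eq_zero_of_isIdempotentElem_of_trace_eq_zero
      (hA.one_sub.mul_of_commute hA'B' hB.one_sub)
      (by simp [sub_mul, mul_sub, h, trace_sub, htA, htB]; norm_num)
    rw [sub_mul, one_mul, mul_sub, mul_one, h, sub_zero] at hcompl
    calc B = 1 - A - (1 - B - A) := by abel
      _ = 1 - A := by rw [hcompl, sub_zero]
  · have hA1 : A = 1 := calc
      A = A * (A * B) := by rw [h, mul_one]
      _ = A * B := by rw [← mul_assoc, hA.eq]
      _ = 1 := h
    norm_num [hA1] at htA
  · left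
    have hA_sub := eq_zero_of_isIdempotentElem_of_trace_eq_zero
      (hA.mul_of_commute hAB' hB.one_sub) (by simp [mul_sub, trace_sub, h, htA])
    have hB_sub := eq_zero_of_isIdempotentElem_of_trace_eq_zero
      (hA.one_sub.mul_of_commute hA'B hB) (by simp [sub_mul, trace_sub, h, htB])
    rw [mul_sub, mul_one, sub_eq_zero] at hA_sub
    rw [sub_mul, one_mul, sub_eq_zero] at hB_sub
    exact hB_sub.trans hA_sub.symm

theorem map_add_sub_mul_add_map_mul_of_commute {v : Matrix (Fin 2) (Fin 2) K → ℝ}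
    (h0 : v 0 = 0) (h1 : v 1 = 1) (hA : IsIdempotentElem A) (hB : IsIdempotentElem B)
    (hAB : Commute A B) (hcA : v (1 - A) = 1 - v A) :
    v (A + B - A * B) + v (A * B) = v A + v B := by
  rcases eq_zero_or_eq_one_or_trace_eq_one_of_isIdempotentElem hA with rfl | rfl | htA
  · simp [h0]
  · rw [one_mul, add_sub_cancel_right]
  rcases eq_zero_or_eq_one_or_trace_eq_one_of_isIdempotentElem hB with rfl | rfl | htB
  · simp [h0]
  · rw [mul_one, add_sub_cancel_left, add_comm]
  rcases eq_or_eq_one_sub_of_commute hA hB hAB htA htB with rfl | rfl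
  · rw [hA.eq, add_sub_cancel_right]
  · rw [hA.mul_one_sub_self, sub_zero, add_sub_cancel, hcA, h0, h1]
    ring

end FinTwo

end Matrix

theorem isQIVPM_self_of_map_one_sub {v : Matrix (Fin 2) (Fin 2) ℂ → ℝ}
    (hv : ∀ P, IsProjector P → v P = 0 ∨ v P = 1) (h0 : v 0 = 0) (h1 : v 1 = 1)
    (hc : ∀ P, IsProjector P → v (1 - P) = 1 - v P) : IsQIVPM v v := by
  refine ⟨fun P hP => ?_, ⟨h0, h0⟩, ⟨h1, h1⟩, fun P hP => ⟨hc P hP, hc P hP⟩,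
    fun P₀ P₁ h₀ h₁ hP₀P₁ => ?_⟩
  · rcases hv P hP with h | h <;> norm_num [h]
  · have := map_add_sub_mul_add_map_mul_of_commute h0 h1 h₀.1 h₁.1 hP₀P₁ (hc P₀ h₀)
    exact ⟨this.ge, this.le⟩

/-- The Bloch vector of `P`, with its coordinates rescaled and reordered. -/
def blochLex (P : Matrix (Fin 2) (Fin 2) ℂ) : Lex (ℝ × Lex (ℝ × ℝ)) :=
  toLex ((P 0 0 - P 1 1).re, toLex ((P 0 1).re, (P 0 1).im))

theorem blochLex_one_sub (P : Matrix (Fin 2) (Fin 2) ℂ) : blochLex (1 - P) = -blochLex P := by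
  have hdiag : (1 - P) 0 0 - (1 - P) 1 1 = -(P 0 0 - P 1 1) := by simp
  have hoff : (1 - P) 0 1 = -P 0 1 := by simp
  simp only [blochLex, hdiag, hoff, Complex.neg_re, Complex.neg_im]
  rfl

theorem blochLex_ne_zero {P : Matrix (Fin 2) (Fin 2) ℂ} (hP : IsIdempotentElem P)
    (ht : P.trace = 1) : blochLex P ≠ 0 := by
  intro h
  change toLex (_, toLex (_, _)) = toLex (0, toLex (0, 0)) at h
  simp only [toLex_inj, Prod.mk.injEq] at h
  obtain ⟨hre, h01re, h01im⟩ := h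
  have h01 : P 0 1 = 0 := Complex.ext h01re h01im
  have e00 := congrFun₂ hP.eq 0 0
  have e11 := congrFun₂ hP.eq 1 1
  simp only [mul_apply, Fin.sum_univ_two, h01, zero_mul, mul_zero, add_zero, zero_add] at e00 e11
  rw [trace_fin_two] at ht
  -- the diagonal entries are idempotents with sum `1`, so they are `0` and `1` in some order
  have hsq : (P 0 0 - P 1 1) * (P 0 0 - P 1 1) = 1 := by
    linear_combination 2 * e00 + 2 * e11 + (1 - P 0 0 - P 1 1) * ht
  rcases mul_self_eq_one_iff.mp hsq with h | h <;> norm_num [h] at hre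

noncomputable def lexValuation (P : Matrix (Fin 2) (Fin 2) ℂ) : ℝ :=
  if P = 1 ∨ 0 < blochLex P then 1 else 0

theorem lexValuation_eq_zero_or_one (P : Matrix (Fin 2) (Fin 2) ℂ) :
    lexValuation P = 0 ∨ lexValuation P = 1 := by
  unfold lexValuation
  split_ifs <;> simp

theorem lexValuation_zero : lexValuation 0 = 0 := by
  have : blochLex 0 = 0 := by simp [blochLex]
  simp [lexValuation, this]

theorem lexValuation_one : lexValuation 1 = 1 := by
  simp [lexValuation]

theorem lexValuation_one_sub {P : Matrix (Fin 2) (Fin 2) ℂ} (hP : IsIdempotentElem P) :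
    lexValuation (1 - P) = 1 - lexValuation P := by
  rcases eq_zero_or_eq_one_or_trace_eq_one_of_isIdempotentElem hP with rfl | rfl | ht
  · rw [sub_zero, lexValuation_one, lexValuation_zero, sub_zero]
  · rw [sub_self, lexValuation_one, lexValuation_zero, sub_self]
  have hP1 : P ≠ 1 := by rintro rfl; norm_num at ht
  have hP1' : 1 - P ≠ 1 := by
    intro h
    rw [sub_eq_self] at h
    simp [h] at ht
  rcases (blochLex_ne_zero hP ht).lt_or_gt with hneg | hpos
  · simp [lexValuation, blochLex_one_sub, hP1, hP1', hneg, hneg.not_gt]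
  · simp [lexValuation, blochLex_one_sub, hP1, hP1', hpos, hpos.not_gt]

/-- Failure of the Kochen–Specker theorem in dimension 2: there exists a
0-deterministic QIVPM on `ℂ²`. -/
theorem zeroDeterministic_QIVPM_exists_dim2 :
    ∃ v : Matrix (Fin 2) (Fin 2) ℂ → ℝ,
      (∀ P, IsProjector P → v P = 0 ∨ v P = 1) ∧ IsQIVPM v v :=
  ⟨lexValuation, fun P _ => lexValuation_eq_zero_or_one P,
    isQIVPM_self_of_map_one_sub (fun P _ => lexValuation_eq_zero_or_one P) lexValuation_zero
      lexValuation_one fun _ hP => lexValuation_one_sub hP.1⟩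
end

section
/- (Empty cores exist for general QIVPMs) On ℂ³ with standard basis vectors e₀, e₁, e₂, let Q₀ be the orthogonal projection matrix onto the span of e₀, Q₊ the orthogonal projection onto the span of (e₀ + e₁)/√2, and Q₊' the orthogonal projection onto the span of (e₀ + e₂)/√2. Then there is no state ρ on ℂ³ with Re (Matrix.trace (ρ * Q₀)) = 0, Re (Matrix.trace (ρ * Q₊)) = 0, and Re (Matrix.trace (ρ * Q₊')) = 0. Consequently, the QIVPM on ℂ³ that assigns the interval [0,0] to 0, Q₀, Q₊, Q₊', the interval [1,1] to their complements and the identity, and [0,1] to all other projectors, has empty core: no state is consistent with it at every projector. -/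
open Matrix
open scoped ComplexOrder

/-- Orthogonal projection onto the span of `e₀`. -/
noncomputable def Q0 : Matrix (Fin 3) (Fin 3) ℂ := !![1, 0, 0; 0, 0, 0; 0, 0, 0]

/-- Orthogonal projection onto the span of `(e₀ + e₁)/√2`. -/
noncomputable def Qplus : Matrix (Fin 3) (Fin 3) ℂ := !![1/2, 1/2, 0; 1/2, 1/2, 0; 0, 0, 0]

/-- Orthogonal projection onto the span of `(e₀ + e₂)/√2`. -/
noncomputable def Qplus' : Matrix (Fin 3) (Fin 3) ℂ := !![1/2, 0, 1/2; 0, 0, 0; 1/2, 0, 1/2]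

open Classical in
/-- Left endpoint: `0` on `{0, Q0, Q₊, Q₊'}`, `1` on their complements and `1`, else `0`. -/
noncomputable def L8 : Matrix (Fin 3) (Fin 3) ℂ → ℝ := fun P =>
  if P = 0 ∨ P = Q0 ∨ P = Qplus ∨ P = Qplus' then 0
  else if P = 1 ∨ P = 1 - Q0 ∨ P = 1 - Qplus ∨ P = 1 - Qplus' then 1
  else 0

open Classical in
/-- Right endpoint: `0` on `{0, Q0, Q₊, Q₊'}`, `1` on their complements and `1`, else `1`. -/
noncomputable def R8 : Matrix (Fin 3) (Fin 3) ℂ → ℝ := fun P =>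
  if P = 0 ∨ P = Q0 ∨ P = Qplus ∨ P = Qplus' then 0
  else if P = 1 ∨ P = 1 - Q0 ∨ P = 1 - Qplus ∨ P = 1 - Qplus' then 1
  else 1

/-!
For a positive semidefinite `ρ`, `Re tr (ρ vv*) = v* ρ v` vanishes only if `ρ v = 0`. The three
projectors have ranges spanned by `e₀`, `e₀ + e₁`, `e₀ + e₂`, which together span `ℂ³`, so a state
annihilating all of them would be `0`, contradicting `tr ρ = 1`. A state in the core of
`(L8, R8)` would be such a state, because both endpoints vanish at these three projectors.
-/

namespace Matrix

variable {n : Type*} [Fintype n]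

theorem trace_mul_vecMulVec_star {R : Type*} [CommSemiring R] [StarRing R] (ρ : Matrix n n R)
    (v : n → R) : trace (ρ * vecMulVec v (star v)) = star v ⬝ᵥ ρ *ᵥ v := by
  rw [mul_vecMulVec, trace_vecMulVec, dotProduct_comm]

theorem PosSemidef.mulVec_eq_zero_of_re_trace_mul_smul_vecMulVec_eq_zero {𝕜 : Type*} [RCLike 𝕜]
    {ρ : Matrix n n 𝕜} (hρ : ρ.PosSemidef) {r : ℝ} (hr : r ≠ 0) {v : n → 𝕜}
    (h : RCLike.re (trace (ρ * (r • vecMulVec v (star v)))) = 0) : ρ *ᵥ v = 0 := by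
  rw [mul_smul_comm, trace_smul, trace_mul_vecMulVec_star, RCLike.smul_re, mul_eq_zero,
    or_iff_right hr] at h
  have him := (RCLike.nonneg_iff.mp (hρ.dotProduct_mulVec_nonneg v)).2
  exact hρ.dotProduct_mulVec_zero_iff v |>.mp (RCLike.ext (by simpa using h) (by simpa using him))

theorem eq_zero_of_mulVec_eq_zero_fin_three {R : Type*} [Ring R] {ρ : Matrix (Fin 3) (Fin 3) R}
    (h₀ : ρ *ᵥ ![1, 0, 0] = 0) (h₁ : ρ *ᵥ ![1, 1, 0] = 0) (h₂ : ρ *ᵥ ![1, 0, 1] = 0) :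
    ρ = 0 := by
  ext i j
  have e₀ := congrFun h₀ i
  have e₁ := congrFun h₁ i
  have e₂ := congrFun h₂ i
  simp only [mulVec, dotProduct, Fin.sum_univ_three, Fin.isValue, cons_val_zero, mul_one,
    cons_val_one, mul_zero, add_zero, cons_val, Pi.zero_apply] at e₀ e₁ e₂
  rw [e₀, zero_add] at e₁ e₂
  fin_cases j <;> assumption

end Matrix

theorem isProjector_smul_vecMulVec_star {d : ℕ} {r : ℝ} {v : Fin d → ℂ}
    (hv : (r : ℂ) * (star v ⬝ᵥ v) = 1) : IsProjector (r • vecMulVec v (star v)) := by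
  constructor
  · rw [smul_mul_smul_comm, vecMulVec_mul_vecMulVec]
    ext i j
    simp only [Matrix.smul_apply, vecMulVec_apply, Pi.smul_apply, Complex.real_smul, smul_eq_mul]
    push_cast
    linear_combination (r * v i * star v j) * hv
  · rw [conjTranspose_smul, conjTranspose_vecMulVec, star_star, star_trivial]

theorem Q0_eq_smul_vecMulVec : Q0 = (1 : ℝ) • vecMulVec ![1, 0, 0] (star ![1, 0, 0]) := by
  ext i j
  fin_cases i <;> fin_cases j <;> simp [Q0, vecMulVec]

theorem Qplus_eq_smul_vecMulVec : Qplus = (2⁻¹ : ℝ) • vecMulVec ![1, 1, 0] (star ![1, 1, 0]) := by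
  ext i j
  fin_cases i <;> fin_cases j <;> simp [Qplus, vecMulVec]

theorem Qplus'_eq_smul_vecMulVec :
    Qplus' = (2⁻¹ : ℝ) • vecMulVec ![1, 0, 1] (star ![1, 0, 1]) := by
  ext i j
  fin_cases i <;> fin_cases j <;> simp [Qplus', vecMulVec]

theorem isProjector_Q0 : IsProjector Q0 := by
  rw [Q0_eq_smul_vecMulVec]
  exact isProjector_smul_vecMulVec_star (by simp [dotProduct, Fin.sum_univ_three])

theorem isProjector_Qplus : IsProjector Qplus := by
  rw [Qplus_eq_smul_vecMulVec]
  exact isProjector_smul_vecMulVec_star (by simp [dotProduct, Fin.sum_univ_three]; norm_num)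

theorem isProjector_Qplus' : IsProjector Qplus' := by
  rw [Qplus'_eq_smul_vecMulVec]
  exact isProjector_smul_vecMulVec_star (by simp [dotProduct, Fin.sum_univ_three]; norm_num)

theorem not_exists_state_re_trace_mul_Q0_Qplus_Qplus'_eq_zero :
    ¬ ∃ ρ : Matrix (Fin 3) (Fin 3) ℂ, IsState ρ ∧
      (trace (ρ * Q0)).re = 0 ∧ (trace (ρ * Qplus)).re = 0 ∧ (trace (ρ * Qplus')).re = 0 := by
  rintro ⟨ρ, ⟨hρ, htrace⟩, h₀, h₁, h₂⟩
  rw [Q0_eq_smul_vecMulVec] at h₀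
  rw [Qplus_eq_smul_vecMulVec] at h₁
  rw [Qplus'_eq_smul_vecMulVec] at h₂
  have hρ_zero : ρ = 0 := eq_zero_of_mulVec_eq_zero_fin_three
    (hρ.mulVec_eq_zero_of_re_trace_mul_smul_vecMulVec_eq_zero one_ne_zero h₀)
    (hρ.mulVec_eq_zero_of_re_trace_mul_smul_vecMulVec_eq_zero (by norm_num) h₁)
    (hρ.mulVec_eq_zero_of_re_trace_mul_smul_vecMulVec_eq_zero (by norm_num) h₂)
  simp [hρ_zero] at htrace

theorem L8_eq_zero_and_R8_eq_zero {P : Matrix (Fin 3) (Fin 3) ℂ}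
    (hP : P = Q0 ∨ P = Qplus ∨ P = Qplus') : L8 P = 0 ∧ R8 P = 0 := by
  simp [L8, R8, hP]

/-- Empty cores exist for general QIVPMs: no state annihilates `Q0`, `Q₊`, `Q₊'`
simultaneously, hence the QIVPM `(L8, R8)` has an empty core. -/
theorem empty_core_exists :
    (¬ ∃ ρ : Matrix (Fin 3) (Fin 3) ℂ, IsState ρ ∧
        (Matrix.trace (ρ * Q0)).re = 0 ∧ (Matrix.trace (ρ * Qplus)).re = 0 ∧
        (Matrix.trace (ρ * Qplus')).re = 0) ∧
    ¬ ∃ ρ : Matrix (Fin 3) (Fin 3) ℂ, IsState ρ ∧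
        ∀ P, IsProjector P →
          L8 P ≤ (Matrix.trace (ρ * P)).re ∧ (Matrix.trace (ρ * P)).re ≤ R8 P := by
  refine ⟨not_exists_state_re_trace_mul_Q0_Qplus_Qplus'_eq_zero, ?_⟩
  rintro ⟨ρ, hρ, hconsistent⟩
  have re_trace_eq_zero : ∀ P, IsProjector P → (P = Q0 ∨ P = Qplus ∨ P = Qplus') →
      (trace (ρ * P)).re = 0 := fun P hP hmem => by
    obtain ⟨hL, hR⟩ := L8_eq_zero_and_R8_eq_zero hmem
    have := hconsistent P hP
    rw [hL, hR] at this
    exact le_antisymm this.2 this.1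
  exact not_exists_state_re_trace_mul_Q0_Qplus_Qplus'_eq_zero ⟨ρ, hρ,
    re_trace_eq_zero Q0 isProjector_Q0 (.inl rfl),
    re_trace_eq_zero Qplus isProjector_Qplus (.inr (.inl rfl)),
    re_trace_eq_zero Qplus' isProjector_Qplus' (.inr (.inr rfl))⟩
end

section
/- (Ultramodular implies QIVPM) Let (ℓ, r) be an ultramodular interval-valued map on [0,1] and let μ be a quantum probability measure on ℂ^d. Then the pair L P = ℓ (μ P), R P = r (μ P) is a QIVPM on ℂ^d. -/
open Matrix
open scoped ComplexOrder

/-- An interval-valued map on `[0,1]`. -/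
def IsIntervalValuedMap (l r : ℝ → ℝ) : Prop :=
  ∀ x ∈ Set.Icc (0:ℝ) 1, 0 ≤ l x ∧ l x ≤ r x ∧ r x ≤ 1

/-- An ultramodular interval-valued map on `[0,1]`. -/
def IsUltramodular (l r : ℝ → ℝ) : Prop :=
  IsIntervalValuedMap l r ∧
  (l 0 = 0 ∧ r 0 = 0) ∧
  (l 1 = 1 ∧ r 1 = 1) ∧
  (∀ x ∈ Set.Icc (0:ℝ) 1, l (1 - x) = 1 - r x ∧ r (1 - x) = 1 - l x) ∧
  (∀ x₀ x₁ x₂ : ℝ, 0 ≤ x₀ → 0 ≤ x₁ → 0 ≤ x₂ → x₀ + x₁ + x₂ ≤ 1 →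
    l (x₀ + x₂) + l (x₁ + x₂) ≤ l (x₀ + x₁ + x₂) + l x₂ ∧
    r (x₀ + x₁ + x₂) + r x₂ ≤ r (x₀ + x₂) + r (x₁ + x₂))

/-- A (sharp) quantum probability measure on `ℂ^d`. -/
def IsQPM {d : ℕ} (μ : Matrix (Fin d) (Fin d) ℂ → ℝ) : Prop :=
  (∀ P, IsProjector P → 0 ≤ μ P ∧ μ P ≤ 1) ∧
  μ 0 = 0 ∧ μ 1 = 1 ∧
  (∀ P, IsProjector P → μ (1 - P) = 1 - μ P) ∧
  (∀ P₀ P₁, IsProjector P₀ → IsProjector P₁ → P₀ * P₁ = 0 → μ (P₀ + P₁) = μ P₀ + μ P₁)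

lemma IsUltramodular.ineq_of_le {l r : ℝ → ℝ} (hu : IsUltramodular l r) {x y z : ℝ}
    (hz : 0 ≤ z) (hzx : z ≤ x) (hzy : z ≤ y) (hxyz : x + y - z ≤ 1) :
    l x + l y ≤ l (x + y - z) + l z ∧ r (x + y - z) + r z ≤ r x + r y := by
  obtain ⟨a, ha, rfl⟩ : ∃ a, 0 ≤ a ∧ x = a + z := ⟨x - z, by linarith, by ring⟩
  obtain ⟨b, hb, rfl⟩ : ∃ b, 0 ≤ b ∧ y = b + z := ⟨y - z, by linarith, by ring⟩
  rw [show a + z + (b + z) - z = a + b + z by ring] at hxyz ⊢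
  exact hu.2.2.2.2 a b z ha hb hz hxyz

namespace IsQPM

variable {d : ℕ} {μ : Matrix (Fin d) (Fin d) ℂ → ℝ} {P Q : Matrix (Fin d) (Fin d) ℂ}

lemma mem_Icc (hμ : IsQPM μ) (hP : IsStarProjection P) : μ P ∈ Set.Icc 0 1 :=
  hμ.1 P (isProjector_iff_isStarProjection.mpr hP)

lemma map_add (hμ : IsQPM μ) (hP : IsStarProjection P) (hQ : IsStarProjection Q)
    (hPQ : P * Q = 0) : μ (P + Q) = μ P + μ Q :=
  hμ.2.2.2.2 P Q (isProjector_iff_isStarProjection.mpr hP)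
    (isProjector_iff_isStarProjection.mpr hQ) hPQ

lemma map_sub_of_mul_eq_left (hμ : IsQPM μ) (hP : IsStarProjection P)
    (hQ : IsStarProjection Q) (hPQ : P * Q = P) : μ (Q - P) = μ Q - μ P := by
  have horth : P * (Q - P) = 0 := by rw [mul_sub, hPQ, hP.isIdempotentElem.eq, sub_self]
  have h := hμ.map_add hP (hP.sub_of_mul_eq_left hQ hPQ) horth
  rw [add_sub_cancel] at h
  linarith

lemma le_of_mul_eq_left (hμ : IsQPM μ) (hP : IsStarProjection P)
    (hQ : IsStarProjection Q) (hPQ : P * Q = P) : μ P ≤ μ Q := by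
  have h := (hμ.mem_Icc (hP.sub_of_mul_eq_left hQ hPQ)).1
  rw [hμ.map_sub_of_mul_eq_left hP hQ hPQ] at h
  linarith

lemma map_add_sub_mul (hμ : IsQPM μ) (hP : IsStarProjection P) (hQ : IsStarProjection Q)
    (hPQ : Commute P Q) : μ (P + Q - P * Q) = μ P + μ Q - μ (P * Q) := by
  have hPQ' : IsStarProjection (P * Q) := hP.mul hQ hPQ
  have hPQP : P * Q * P = P * Q := by rw [hPQ.eq, hP.isIdempotentElem.mul_mul_self]
  have horth : (P - P * Q) * Q = 0 := by
    rw [sub_mul, hQ.isIdempotentElem.mul_mul_self, sub_self]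
  have h := hμ.map_add (hPQ'.sub_of_mul_eq_left hP hPQP) hQ horth
  rw [sub_add_eq_add_sub] at h
  rw [h, hμ.map_sub_of_mul_eq_left hPQ' hP hPQP]
  ring

end IsQPM

/-- Composing an ultramodular interval-valued map with a quantum probability
measure yields a QIVPM. -/
theorem ultramodular_comp_QPM_is_QIVPM {d : ℕ} (l r : ℝ → ℝ)
    (hu : IsUltramodular l r)
    (μ : Matrix (Fin d) (Fin d) ℂ → ℝ) (hμ : IsQPM μ) :
    IsQIVPM (fun P => l (μ P)) (fun P => r (μ P)) := by
  have ⟨hlr, ⟨hl0, hr0⟩, ⟨hl1, hr1⟩, hcompl, _⟩ := hu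
  have ⟨hμIcc, hμ0, hμ1, hμcompl, _⟩ := hμ
  refine ⟨fun P hP ↦ hlr _ (hμIcc P hP), by simp [hμ0, hl0, hr0], by simp [hμ1, hl1, hr1],
    fun P hP ↦ ?_, fun P Q hP hQ (hPQ : Commute P Q) ↦ ?_⟩ <;> dsimp only
  · rw [hμcompl P hP]
    exact hcompl _ (hμIcc P hP)
  rw [isProjector_iff_isStarProjection] at hP hQ
  have hPQ' := hP.mul hQ hPQ
  have hPQ_le_P := hμ.le_of_mul_eq_left hPQ' hP (by rw [hPQ.eq, hP.isIdempotentElem.mul_mul_self])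
  have hPQ_le_Q := hμ.le_of_mul_eq_left hPQ' hQ (hQ.isIdempotentElem.mul_mul_self P)
  have hsup_le_one := (hμ.mem_Icc (IsStarProjection.add_sub_mul_of_commute hPQ hP hQ)).2
  rw [hμ.map_add_sub_mul hP hQ hPQ] at hsup_le_one ⊢
  exact hu.ineq_of_le (hμ.mem_Icc hPQ').1 hPQ_le_P hPQ_le_Q hsup_le_one
end

section
/- (Ultramodular implies classical IVPM) Let (ℓ, r) be an ultramodular interval-valued map on [0,1]. Then for every measurable space Ω and every probability measure μ on Ω, the assignment of intervals E ↦ [ℓ (μ E), r (μ E)] to measurable sets E satisfies: ℓ (μ ∅) = r (μ ∅) = 0; ℓ (μ Ω) = r (μ Ω) = 1; for every measurable E, ℓ (μ Eᶜ) = 1 − r (μ E) and r (μ Eᶜ) = 1 − ℓ (μ E); and for all measurable E, F: ℓ (μ E) + ℓ (μ F) ≤ ℓ (μ (E ∪ F)) + ℓ (μ (E ∩ F)) and r (μ (E ∪ F)) + r (μ (E ∩ F)) ≤ r (μ E) + r (μ F). (Here μ E denotes the real-valued measure of E.) -/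
open Matrix
open scoped ComplexOrder

/-! The measures `a = μ (E \ F)`, `b = μ (F \ E)`, `c = μ (E ∩ F)` satisfy `a + c = μ E`,
`b + c = μ F` and `a + b + c = μ (E ∪ F) ≤ 1`, so the ultramodularity inequalities at
`(x₀, x₁, x₂) = (a, b, c)` are exactly the IVPM inequalities for `E` and `F`; normalization and
complementation pass through `μ` unchanged since `μ ∅ = 0`, `μ univ = 1`, `μ Eᶜ = 1 - μ E`. -/

namespace IsUltramodular

variable {l r : ℝ → ℝ}

theorem modular_ineqs (hu : IsUltramodular l r) {x y u v : ℝ} (hv : 0 ≤ v) (hvx : v ≤ x)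
    (hvy : v ≤ y) (hu1 : u ≤ 1) (hsum : u + v = x + y) :
    l x + l y ≤ l u + l v ∧ r u + r v ≤ r x + r y := by
  obtain ⟨-, -, -, -, hineqs⟩ := hu
  have key := hineqs (x - v) (y - v) v (by linarith) (by linarith) hv (by linarith)
  have hx : x - v + v = x := by ring
  have hy : y - v + v = y := by ring
  have hu' : x - v + (y - v) + v = u := by linarith
  rwa [hx, hy, hu'] at key

open MeasureTheory

variable {Ω : Type*} [MeasurableSpace Ω] (μ : Measure Ω) [IsProbabilityMeasure μ]

theorem comp_measureReal_compl (hu : IsUltramodular l r) {E : Set Ω} (hE : MeasurableSet E) :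
    l (μ.real Eᶜ) = 1 - r (μ.real E) ∧ r (μ.real Eᶜ) = 1 - l (μ.real E) := by
  obtain ⟨-, -, -, hsymm, -⟩ := hu
  rw [probReal_compl_eq_one_sub hE]
  exact hsymm _ ⟨measureReal_nonneg, measureReal_le_one⟩

theorem comp_measureReal_union_inter (hu : IsUltramodular l r) (E : Set Ω) {F : Set Ω}
    (hF : MeasurableSet F) :
    l (μ.real E) + l (μ.real F) ≤ l (μ.real (E ∪ F)) + l (μ.real (E ∩ F)) ∧
      r (μ.real (E ∪ F)) + r (μ.real (E ∩ F)) ≤ r (μ.real E) + r (μ.real F) :=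
  hu.modular_ineqs measureReal_nonneg (measureReal_mono Set.inter_subset_left)
    (measureReal_mono Set.inter_subset_right) measureReal_le_one (measureReal_union_add_inter hF)

end IsUltramodular

open MeasureTheory in
/-- Composing an ultramodular interval-valued map with any classical probability
measure yields a classical IVPM. -/
theorem ultramodular_comp_prob_is_IVPM (l r : ℝ → ℝ) (hu : IsUltramodular l r)
    {Ω : Type*} [MeasurableSpace Ω] (μ : ProbabilityMeasure Ω) :
    (l (μ (∅ : Set Ω) : ℝ) = 0 ∧ r (μ (∅ : Set Ω) : ℝ) = 0) ∧
    (l (μ (Set.univ : Set Ω) : ℝ) = 1 ∧ r (μ (Set.univ : Set Ω) : ℝ) = 1) ∧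
    (∀ E : Set Ω, MeasurableSet E →
      l (μ Eᶜ : ℝ) = 1 - r (μ E : ℝ) ∧ r (μ Eᶜ : ℝ) = 1 - l (μ E : ℝ)) ∧
    (∀ E F : Set Ω, MeasurableSet E → MeasurableSet F →
      l (μ E : ℝ) + l (μ F : ℝ) ≤ l (μ (E ∪ F) : ℝ) + l (μ (E ∩ F) : ℝ) ∧
      r (μ (E ∪ F) : ℝ) + r (μ (E ∩ F) : ℝ) ≤ r (μ E : ℝ) + r (μ F : ℝ)) := by
  have ⟨_, hzero, hone, _⟩ := hu
  simp only [← ProbabilityMeasure.measureReal_eq_coe_coeFn, measureReal_empty, probReal_univ]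
  exact ⟨hzero, hone, fun E hE ↦ hu.comp_measureReal_compl μ hE,
    fun E _ _ hF ↦ hu.comp_measureReal_union_inter μ E hF⟩
end

section
/- (Classical IVPM composition implies ultramodular) Let ℓ, r : ℝ → ℝ satisfy 0 ≤ ℓ x ≤ r x ≤ 1 for all x ∈ [0,1]. Suppose that for every measurable space Ω and every probability measure μ on Ω, the assignment E ↦ [ℓ (μ E), r (μ E)] satisfies the classical IVPM axioms: ℓ (μ ∅) = r (μ ∅) = 0; ℓ (μ Ω) = r (μ Ω) = 1; ℓ (μ Eᶜ) = 1 − r (μ E) and r (μ Eᶜ) = 1 − ℓ (μ E) for every measurable E; and ℓ (μ E) + ℓ (μ F) ≤ ℓ (μ (E ∪ F)) + ℓ (μ (E ∩ F)) and r (μ (E ∪ F)) + r (μ (E ∩ F)) ≤ r (μ E) + r (μ F) for all measurable E, F. Then (ℓ, r) is an ultramodular interval-valued map on [0,1]. -/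
open Matrix
open scoped ComplexOrder

/-! Each axiom of ultramodularity is read off one instance of the IVPM axioms for a probability
measure on four atoms with masses `x₀, x₁, x₂` and `1 - (x₀ + x₁ + x₂)`: supermodularity of `l` and
submodularity of `r` on the events `{0, 2}` and `{1, 2}` give the two ultramodular inequalities,
and the complement rule on `{0}` gives the symmetry `l (1 - x) = 1 - r x`. -/

theorem MeasureTheory.ProbabilityMeasure.exists_coeFn_eq_sum_indicator {ι : Type*} [Fintype ι]
    [MeasurableSpace ι] [MeasurableSingletonClass ι] (w : ι → ℝ) (hw : ∀ i, 0 ≤ w i)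
    (hsum : ∑ i, w i = 1) :
    ∃ μ : ProbabilityMeasure ι, ∀ S : Set ι, (μ S : ℝ) = ∑ i, S.indicator w i := by
  have hsum' : ∑ i, ENNReal.ofReal (w i) = 1 := by
    rw [← ENNReal.ofReal_sum_of_nonneg fun i _ ↦ hw i, hsum, ENNReal.ofReal_one]
  refine ⟨⟨(PMF.ofFintype _ hsum').toMeasure, inferInstance⟩, fun S ↦ ?_⟩
  rw [ProbabilityMeasure.mk_apply, ENNReal.coe_toNNReal_eq_toReal, PMF.toMeasure_apply_fintype,
    ENNReal.toReal_sum fun i _ ↦ ?_]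
  · refine Finset.sum_congr rfl fun i _ ↦ ?_
    by_cases hi : i ∈ S <;> simp [hi, hw i]
  · by_cases hi : i ∈ S <;> simp [hi]

theorem MeasureTheory.exists_probabilityMeasure_fin_four {x₀ x₁ x₂ : ℝ} (h₀ : 0 ≤ x₀)
    (h₁ : 0 ≤ x₁) (h₂ : 0 ≤ x₂) (hle : x₀ + x₁ + x₂ ≤ 1) :
    ∃ μ : ProbabilityMeasure (Fin 4), ∀ S : Set (Fin 4),
      (μ S : ℝ) = ∑ i, S.indicator ![x₀, x₁, x₂, 1 - (x₀ + x₁ + x₂)] i := by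
  refine ProbabilityMeasure.exists_coeFn_eq_sum_indicator _ (fun i ↦ ?_) ?_
  · fin_cases i <;> simp [*]
  · simp [Fin.sum_univ_four]

open MeasureTheory in
/-- If composing `(l, r)` with every classical probability measure yields a classical
IVPM, then `(l, r)` is ultramodular. -/
theorem IVPM_comp_implies_ultramodular (l r : ℝ → ℝ)
    (hmap : IsIntervalValuedMap l r)
    (hcomp : ∀ (Ω : Type) (_ : MeasurableSpace Ω) (μ : ProbabilityMeasure Ω),
      (l (μ (∅ : Set Ω) : ℝ) = 0 ∧ r (μ (∅ : Set Ω) : ℝ) = 0) ∧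
      (l (μ (Set.univ : Set Ω) : ℝ) = 1 ∧ r (μ (Set.univ : Set Ω) : ℝ) = 1) ∧
      (∀ E : Set Ω, MeasurableSet E →
        l (μ Eᶜ : ℝ) = 1 - r (μ E : ℝ) ∧ r (μ Eᶜ : ℝ) = 1 - l (μ E : ℝ)) ∧
      (∀ E F : Set Ω, MeasurableSet E → MeasurableSet F →
        l (μ E : ℝ) + l (μ F : ℝ) ≤ l (μ (E ∪ F) : ℝ) + l (μ (E ∩ F) : ℝ) ∧
        r (μ (E ∪ F) : ℝ) + r (μ (E ∩ F) : ℝ) ≤ r (μ E : ℝ) + r (μ F : ℝ))) :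
    IsUltramodular l r := by
  obtain ⟨μ, -⟩ := exists_probabilityMeasure_fin_four (le_refl (0 : ℝ)) le_rfl le_rfl (by norm_num)
  obtain ⟨hempty, huniv, -⟩ := hcomp _ _ μ
  refine ⟨hmap, by simpa using hempty, by simpa using huniv, ?_, ?_⟩
  · rintro x ⟨hx₀, hx₁⟩
    obtain ⟨μ, hμ⟩ := exists_probabilityMeasure_fin_four hx₀ le_rfl le_rfl (by linarith)
    simpa [hμ, Fin.sum_univ_four, Set.indicator_apply] using
      (hcomp _ _ μ).2.2.1 {0} .of_discrete
  · intro x₀ x₁ x₂ h₀ h₁ h₂ hle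
    obtain ⟨μ, hμ⟩ := exists_probabilityMeasure_fin_four h₀ h₁ h₂ hle
    have h := (hcomp _ _ μ).2.2.2 {0, 2} {1, 2} .of_discrete .of_discrete
    simpa [hμ, Fin.sum_univ_four, Set.indicator_apply, add_comm x₀ x₁] using h
end

section
/- (Range of ultramodular functions) Let (ℓ, r) be an ultramodular interval-valued map on [0,1]. Then either ℓ x = 0 and r x = 1 for every x in the open interval (0,1) — so that the set of intervals { [ℓ x, r x] : x ∈ [0,1] } is exactly { [0,0], [1,1], [0,1] } — or the set { (ℓ x, r x) : x ∈ [0,1] } ⊆ ℝ × ℝ is uncountable. -/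
open Matrix
open scoped ComplexOrder

/-!
Supermodularity of `ℓ`, read with `x₀ = b - a`, `x₁ = h`, `x₂ = a`, says that the increments
`ℓ (a + h) - ℓ a` grow with `a` (Wright convexity); with `ℓ 0 = 0` and `ℓ ≥ 0` this makes `ℓ`
monotone. If `ℓ` were flat on some `[s, s + h]` beyond a point where it is positive, every
increment of length `h` below `s` would vanish, and stepping down from `s` by multiples of `h`
would land in `[0, h)`, where `ℓ ≤ ℓ h = ℓ 0 = 0`. So `ℓ` is strictly increasing on `[x, 1]`
once `ℓ x > 0`. Submodularity of `r` makes `y ↦ 1 - r (1 - y)` Wright convex as well, so `r` is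
strictly increasing on `[0, x]` once `r x < 1`. Outside the three-valued case one of the two
happens at some `x ∈ (0, 1)`, and then `x ↦ (ℓ x, r x)` is injective on a nondegenerate interval.
-/

open Set

def WrightConvexOnUnit (f : ℝ → ℝ) : Prop :=
  ∀ a b h : ℝ, 0 ≤ a → a ≤ b → 0 ≤ h → b + h ≤ 1 → f (a + h) - f a ≤ f (b + h) - f b

namespace WrightConvexOnUnit

variable {f : ℝ → ℝ}

theorem monotoneOn (hf : WrightConvexOnUnit f) (h0 : f 0 = 0)
    (hnn : ∀ x ∈ Icc (0 : ℝ) 1, 0 ≤ f x) : MonotoneOn f (Icc 0 1) := by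
  intro s hs t ht hst
  have hinc := hf 0 s (t - s) le_rfl hs.1 (sub_nonneg.2 hst) (by linarith [ht.2])
  rw [zero_add, h0, add_sub_cancel] at hinc
  linarith [hnn (t - s) ⟨sub_nonneg.2 hst, by linarith [hs.1, ht.2]⟩]

theorem map_add_eq_of_le (hf : WrightConvexOnUnit f) (hmono : MonotoneOn f (Icc 0 1))
    {s h a : ℝ} (hh : 0 ≤ h) (hsh : s + h ≤ 1) (hper : f (s + h) = f s)
    (ha : 0 ≤ a) (has : a ≤ s) : f (a + h) = f a :=
  le_antisymm (by linarith [hf a s h ha has hh hsh])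
    (hmono ⟨ha, by linarith⟩ ⟨by linarith, by linarith⟩ (by linarith))

theorem map_add_nat_mul_eq_of_le (hf : WrightConvexOnUnit f) (hmono : MonotoneOn f (Icc 0 1))
    {s h a : ℝ} (hh : 0 ≤ h) (hsh : s + h ≤ 1) (hper : f (s + h) = f s) (ha : 0 ≤ a) :
    ∀ n : ℕ, a + n * h ≤ s → f (a + n * h) = f a := by
  intro n
  induction n with
  | zero => simp
  | succ n ih =>
    intro hn
    push_cast at hn
    have hstep := hf.map_add_eq_of_le hmono hh hsh hper (a := a + n * h) (by positivity)
      (by linarith)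
    rw [← ih (by linarith), ← hstep]
    congr 1
    push_cast
    ring

theorem strictMonoOn (hf : WrightConvexOnUnit f) (h0 : f 0 = 0)
    (hnn : ∀ x ∈ Icc (0 : ℝ) 1, 0 ≤ f x) {x₀ : ℝ} (hx₀ : 0 ≤ x₀) (hpos : 0 < f x₀) :
    StrictMonoOn f (Icc x₀ 1) := by
  have hmono := hf.monotoneOn h0 hnn
  intro s hs t ht hst
  by_contra! hle
  set h := t - s with hh_def
  have hh : 0 < h := sub_pos.2 hst
  have hsh : s + h ≤ 1 := by rw [hh_def, add_sub_cancel]; exact ht.2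
  have hper : f (s + h) = f s :=
    le_antisymm (by rwa [hh_def, add_sub_cancel])
      (hmono ⟨by linarith [hs.1], by linarith⟩ ⟨by linarith [hs.1], hsh⟩ (by linarith))
  have hs0 : 0 ≤ s := hx₀.trans hs.1
  have hfh : f h = 0 := by
    simpa [h0] using hf.map_add_eq_of_le hmono hh.le hsh hper le_rfl hs0
  set n := ⌊s / h⌋₊
  have hn_le : n * h ≤ s := (le_div_iff₀ hh).1 (Nat.floor_le (div_nonneg hs0 hh.le))
  have hn_gt : s < (n + 1) * h := (div_lt_iff₀ hh).1 (Nat.lt_floor_add_one _)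
  have hrem : f s = f (s - n * h) := by
    simpa using hf.map_add_nat_mul_eq_of_le hmono hh.le hsh hper (sub_nonneg.2 hn_le) n
      (by rw [sub_add_cancel])
  have hrem_le : f (s - n * h) ≤ f h :=
    hmono ⟨sub_nonneg.2 hn_le, by linarith⟩ ⟨hh.le, by linarith⟩ (by linarith)
  linarith [hmono ⟨hx₀, hs.1.trans hs.2⟩ ⟨hs0, hs.2⟩ hs.1]

end WrightConvexOnUnit

theorem not_countable_image_of_injOn_Icc {β : Type*} {g : ℝ → β} {s : Set ℝ} {a b : ℝ}
    (hab : a < b) (hsub : Icc a b ⊆ s) (hg : InjOn g (Icc a b)) : ¬ (g '' s).Countable :=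
  fun hc => (Cardinal.Real.Icc_countable_iff.1
    (countable_of_injective_of_countable_image hg (hc.mono (image_mono hsub)))).not_gt hab

namespace IsUltramodular

variable {l r : ℝ → ℝ}

theorem wrightConvexOnUnit_left (hu : IsUltramodular l r) : WrightConvexOnUnit l := by
  intro a b h ha hab hh hbh
  have hsup := (hu.2.2.2.2 (b - a) h a (sub_nonneg.2 hab) hh ha (by linarith)).1
  have e : b - a + h + a = b + h := by ring
  rw [sub_add_cancel, add_comm h, e] at hsup
  linarith

theorem wrightConvexOnUnit_dual (hu : IsUltramodular l r) :
    WrightConvexOnUnit (fun y => 1 - r (1 - y)) := by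
  intro a b h ha hab hh hbh
  have hsub := (hu.2.2.2.2 (b - a) h (1 - b - h) (sub_nonneg.2 hab) hh (by linarith)
    (by linarith)).2
  have e₁ : b - a + h + (1 - b - h) = 1 - a := by ring
  have e₂ : b - a + (1 - b - h) = 1 - (a + h) := by ring
  have e₃ : h + (1 - b - h) = 1 - b := by ring
  rw [e₁, e₂, e₃, sub_sub] at hsub
  linarith

theorem strictMonoOn_left (hu : IsUltramodular l r) {x : ℝ} (hx : 0 ≤ x) (hpos : 0 < l x) :
    StrictMonoOn l (Icc x 1) :=
  hu.wrightConvexOnUnit_left.strictMonoOn hu.2.1.1 (fun y hy => (hu.1 y hy).1) hx hpos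

theorem strictMonoOn_right (hu : IsUltramodular l r) {x : ℝ} (hx : x ≤ 1) (hlt : r x < 1) :
    StrictMonoOn r (Icc 0 x) := by
  have hdual := hu.wrightConvexOnUnit_dual.strictMonoOn (by simp [hu.2.2.1.2])
    (fun y hy => by simpa using (hu.1 (1 - y) ⟨by linarith [hy.2], by linarith [hy.1]⟩).2.2)
    (sub_nonneg.2 hx) (by simpa using hlt)
  intro a ha b hb hab
  have := hdual ⟨by linarith [hb.2], by linarith [hb.1]⟩ ⟨by linarith [ha.2], by linarith [ha.1]⟩
    (by linarith : 1 - b < 1 - a)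
  simpa using this

theorem image_eq_of_forall_Ioo (hu : IsUltramodular l r)
    (hmid : ∀ x ∈ Ioo (0 : ℝ) 1, l x = 0 ∧ r x = 1) :
    (fun x => (l x, r x)) '' Icc (0 : ℝ) 1 = {((0 : ℝ), (0 : ℝ)), (1, 1), (0, 1)} := by
  obtain ⟨-, ⟨hl0, hr0⟩, ⟨hl1, hr1⟩, -⟩ := hu
  apply Subset.antisymm
  · rintro _ ⟨x, hx, rfl⟩
    rcases hx.1.eq_or_lt with rfl | hx0
    · simp [hl0, hr0]
    rcases hx.2.eq_or_lt with rfl | hx1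
    · simp [hl1, hr1]
    simp [hmid x ⟨hx0, hx1⟩]
  · have hhalf := hmid 2⁻¹ ⟨by norm_num, by norm_num⟩
    rintro _ (rfl | rfl | rfl)
    · exact ⟨0, left_mem_Icc.2 zero_le_one, by simp [hl0, hr0]⟩
    · exact ⟨1, right_mem_Icc.2 zero_le_one, by simp [hl1, hr1]⟩
    · exact ⟨2⁻¹, ⟨by norm_num, by norm_num⟩, by simp [hhalf]⟩

end IsUltramodular

/-- Range of ultramodular functions: either the map is the three-valued one
`{[0,0], [1,1], [0,1]}`, or its range of intervals is uncountable. -/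
theorem ultramodular_range (l r : ℝ → ℝ) (hu : IsUltramodular l r) :
    ((∀ x ∈ Set.Ioo (0:ℝ) 1, l x = 0 ∧ r x = 1) ∧
      (fun x => (l x, r x)) '' Set.Icc (0:ℝ) 1 =
        {((0:ℝ), (0:ℝ)), (1, 1), (0, 1)}) ∨
    ¬ ((fun x => (l x, r x)) '' Set.Icc (0:ℝ) 1).Countable := by
  by_cases hmid : ∀ x ∈ Ioo (0 : ℝ) 1, l x = 0 ∧ r x = 1
  · exact Or.inl ⟨hmid, hu.image_eq_of_forall_Ioo hmid⟩
  right
  push Not at hmid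
  obtain ⟨x, ⟨hx0, hx1⟩, hne⟩ := hmid
  obtain ⟨hl_nonneg, -, hr_le⟩ := hu.1 x ⟨hx0.le, hx1.le⟩
  rcases hl_nonneg.lt_or_eq with hpos | hzero
  · exact not_countable_image_of_injOn_Icc hx1 (Icc_subset_Icc hx0.le le_rfl)
      fun a ha b hb hab => (hu.strictMonoOn_left hx0.le hpos).injOn ha hb congr($hab.1)
  · have hlt : r x < 1 := hr_le.lt_of_ne (hne hzero.symm)
    exact not_countable_image_of_injOn_Icc hx0 (Icc_subset_Icc le_rfl hx1.le)
      fun a ha b hb hab => (hu.strictMonoOn_right hx1.le hlt).injOn ha hb congr($hab.2)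
end

section
/- (Continuity of the left-end function) Let g : ℝ → ℝ satisfy 0 ≤ g x ≤ 1 for all x ∈ [0,1], and suppose that for all x₀, x₁, x₂ ≥ 0 with x₀ + x₁ + x₂ ≤ 1 one has g (x₀ + x₁ + x₂) + g x₂ ≥ g (x₀ + x₂) + g (x₁ + x₂) (g is Wright-convex/ultramodular on [0,1]). Then g is continuous at every point of the open interval (0,1). -/
/-!
Ultramodularity says exactly that the increments `g (u + h) - g u` are nondecreasing in `u`.
Telescoping `n` consecutive increments of length `h` from `a` upwards, each at least the first,
gives `n (g (a + h) - g a) ≤ g (a + n h) - g a ≤ 1`; telescoping the `n` increments ending at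
`a + h`, each at most the last, gives `-1 ≤ n (g (a + h) - g a)`. So near an interior point
every increment of `g` is at most `1 / n` in absolute value.
-/

open Finset

theorem sub_eq_sum_range_increments (f : ℝ → ℝ) (b h : ℝ) (n : ℕ) :
    f (b + n * h) - f b = ∑ k ∈ range n, (f (b + (k + 1 : ℕ) * h) - f (b + k * h)) := by
  rw [sum_range_sub (fun k : ℕ => f (b + k * h))]
  simp

def UltramodularOnUnitInterval (g : ℝ → ℝ) : Prop :=
  ∀ x₀ x₁ x₂ : ℝ, 0 ≤ x₀ → 0 ≤ x₁ → 0 ≤ x₂ → x₀ + x₁ + x₂ ≤ 1 →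
    g (x₀ + x₂) + g (x₁ + x₂) ≤ g (x₀ + x₁ + x₂) + g x₂

namespace UltramodularOnUnitInterval

variable {g : ℝ → ℝ}

theorem increment_le_increment (hg : UltramodularOnUnitInterval g) {u v h : ℝ} (hu : 0 ≤ u)
    (huv : u ≤ v) (hh : 0 ≤ h) (hv : v + h ≤ 1) :
    g (u + h) - g u ≤ g (v + h) - g v := by
  have key := hg h (v - u) u hh (by linarith) hu (by linarith)
  rw [show h + (v - u) + u = v + h by ring, show v - u + u = v by ring, add_comm h u] at key
  linarith

theorem mul_increment_le_sub (hg : UltramodularOnUnitInterval g) {b h : ℝ} {n : ℕ} (hb : 0 ≤ b)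
    (hh : 0 ≤ h) (hn : b + n * h ≤ 1) :
    n * (g (b + h) - g b) ≤ g (b + n * h) - g b := by
  rw [sub_eq_sum_range_increments, ← nsmul_eq_mul]
  nth_rewrite 1 [← card_range n]
  refine card_nsmul_le_sum (range n) _ (g (b + h) - g b) fun k hk => ?_
  have hk : (k : ℝ) + 1 ≤ n := by exact_mod_cast mem_range.mp hk
  have hkh : 0 ≤ k * h := by positivity
  rw [show b + (k + 1 : ℕ) * h = b + k * h + h by push_cast; ring]
  exact hg.increment_le_increment hb (le_add_of_nonneg_right hkh) hh (by nlinarith)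

theorem sub_le_mul_increment (hg : UltramodularOnUnitInterval g) {b h : ℝ} {n : ℕ} (hb : 0 ≤ b)
    (hh : 0 ≤ h) (hn : b + n * h ≤ 1) :
    g (b + n * h) - g b ≤ n * (g (b + n * h) - g (b + (n - 1) * h)) := by
  rw [sub_eq_sum_range_increments, ← nsmul_eq_mul]
  nth_rewrite 2 [← card_range n]
  refine sum_le_card_nsmul (range n) _ (g (b + n * h) - g (b + (n - 1) * h)) fun k hk => ?_
  have hk : (k : ℝ) + 1 ≤ n := by exact_mod_cast mem_range.mp hk
  have hkh : 0 ≤ k * h := by positivity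
  have hlast := hg.increment_le_increment (v := b + (n - 1) * h) (add_nonneg hb hkh) (by nlinarith)
    hh (by linarith)
  rwa [show b + (n - 1) * h + h = b + n * h by ring, add_assoc, ← add_one_mul, ← Nat.cast_succ]
    at hlast

theorem abs_increment_le (hg : UltramodularOnUnitInterval g)
    (hb : ∀ x ∈ Set.Icc (0:ℝ) 1, 0 ≤ g x ∧ g x ≤ 1) {a h : ℝ} {n : ℕ} (hn : 0 < n) (hh : 0 ≤ h)
    (hlo : n * h ≤ a) (hhi : a + n * h ≤ 1) :
    |g (a + h) - g a| ≤ 1 / n := by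
  have hn' : (0 : ℝ) < n := by exact_mod_cast hn
  have h1 : (1 : ℝ) ≤ n := by exact_mod_cast hn
  have hnh : 0 ≤ n * h := by positivity
  have up := hg.mul_increment_le_sub (le_trans hnh hlo) hh hhi
  have down := hg.sub_le_mul_increment (b := a - (n - 1) * h) (by nlinarith) hh (by nlinarith)
  rw [show a - (n - 1) * h + n * h = a + h by ring,
    show a - (n - 1) * h + (n - 1) * h = a by ring] at down
  have h_top := hb (a + n * h) ⟨by linarith, hhi⟩
  have h_a := hb a ⟨by linarith, by linarith⟩
  have h_ah := hb (a + h) ⟨by linarith, by nlinarith⟩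
  have h_bot := hb (a - (n - 1) * h) ⟨by nlinarith, by nlinarith⟩
  have : |(g (a + h) - g a) * n| ≤ 1 := abs_le.mpr ⟨by nlinarith, by nlinarith⟩
  rwa [abs_mul, abs_of_pos hn', ← le_div_iff₀ hn'] at this

theorem abs_sub_le (hg : UltramodularOnUnitInterval g)
    (hb : ∀ x ∈ Set.Icc (0:ℝ) 1, 0 ≤ g x ∧ g x ≤ 1) {x y : ℝ} {n : ℕ} (hn : 0 < n)
    (hx : (n + 1) * |y - x| ≤ x) (hx' : (n + 1) * |y - x| ≤ 1 - x) :
    |g y - g x| ≤ 1 / n := by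
  rcases le_total x y with hxy | hyx
  · rw [abs_of_nonneg (sub_nonneg.mpr hxy)] at hx hx'
    have := hg.abs_increment_le hb hn (sub_nonneg.mpr hxy) (by nlinarith) (by nlinarith)
    rwa [add_sub_cancel] at this
  · rw [abs_sub_comm] at hx hx' ⊢
    rw [abs_of_nonneg (sub_nonneg.mpr hyx)] at hx hx'
    have := hg.abs_increment_le hb hn (sub_nonneg.mpr hyx) (by nlinarith) (by nlinarith)
    rwa [add_sub_cancel] at this

end UltramodularOnUnitInterval

/-- Continuity of the left-end function: a `[0,1]`-bounded ultramodular
(Wright-convex) function on `[0,1]` is continuous on the open interval `(0,1)`. -/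
theorem ultramodular_continuousOn (g : ℝ → ℝ)
    (hb : ∀ x ∈ Set.Icc (0:ℝ) 1, 0 ≤ g x ∧ g x ≤ 1)
    (hum : ∀ x₀ x₁ x₂ : ℝ, 0 ≤ x₀ → 0 ≤ x₁ → 0 ≤ x₂ → x₀ + x₁ + x₂ ≤ 1 →
      g (x₀ + x₂) + g (x₁ + x₂) ≤ g (x₀ + x₁ + x₂) + g x₂) :
    ∀ x ∈ Set.Ioo (0:ℝ) 1, ContinuousAt g x := by
  intro x ⟨hx0, hx1⟩
  rw [Metric.continuousAt_iff]
  intro ε hε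
  obtain ⟨m, hm⟩ := exists_nat_one_div_lt hε
  have hm' : (0 : ℝ) < m + 1 + 1 := by positivity
  refine ⟨min x (1 - x) / (m + 1 + 1), div_pos (lt_min hx0 (by linarith)) hm', fun y hy => ?_⟩
  rw [Real.dist_eq, lt_div_iff₀ hm', mul_comm] at hy
  have := UltramodularOnUnitInterval.abs_sub_le hum hb (x := x) (y := y) (n := m + 1) m.succ_pos
    (by push_cast; linarith [min_le_left x (1 - x)])
    (by push_cast; linarith [min_le_right x (1 - x)])
  rw [Real.dist_eq]
  push_cast at this
  linarith
end

section
/- (Non-empty core for compatible measurements) Let (L, R) be a QIVPM on ℂ^d and let S be a set of projectors on ℂ^d such that all elements of S pairwise commute, S contains the zero and identity matrices, and S is closed under P ↦ 1 − P, under (P, Q) ↦ P * Q, and under (P, Q) ↦ P + Q − P * Q. Then there exists a state ρ on ℂ^d consistent with (L, R) on every element of S, i.e. L P ≤ Re (Matrix.trace (ρ * P)) ≤ R P for every P ∈ S. -/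
/-! Shapley's greedy argument for supermodular games. Take a maximal chain
`0 = P₀ < P₁ < ⋯ < Pₙ = 1` in `S` (with `P ≤ Q` read as `P * Q = P`) and spread the weight
`L Pᵢ₊₁ - L Pᵢ` uniformly over the atom `Pᵢ₊₁ - Pᵢ`. Every `X ∈ S` either contains or misses each
atom, so by supermodularity of `L` it receives at least `L X`; the bound by `R` follows by
applying this to `1 - X`. The chain is built from the top down, by induction on the rank. -/

open Matrix
open scoped ComplexOrder

namespace IsProjector

variable {d : ℕ} {P Q : Matrix (Fin d) (Fin d) ℂ}

lemma posSemidef (hP : IsProjector P) : P.PosSemidef := by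
  simpa only [hP.2, hP.1] using posSemidef_conjTranspose_mul_self P

lemma trace_eq_rank (hP : IsProjector P) : P.trace = P.rank := by
  have hidem : IsIdempotentElem (toLinAlgEquiv' P) := (show IsIdempotentElem P from hP.1).map _
  rw [← trace_toLin'_eq]
  exact ((LinearMap.isProj_range_iff_isIdempotentElem _).mpr hidem).trace

lemma sub_of_mul_eq (hP : IsProjector P) (hQ : IsProjector Q) (hPQ : P * Q = P)
    (hQP : Q * P = P) : IsProjector (Q - P) :=
  ⟨by rw [sub_mul, mul_sub, mul_sub, hP.1, hQ.1, hPQ, hQP]; abel,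
    by rw [conjTranspose_sub, hP.2, hQ.2]⟩

lemma rank_pos (hP : IsProjector P) (h : P ≠ 0) : 0 < P.rank := by
  have := hP.posSemidef.trace_eq_zero_iff.not.mpr h
  rw [hP.trace_eq_rank] at this
  exact Nat.pos_of_ne_zero (by exact_mod_cast this)

lemma rank_add_rank_sub (hP : IsProjector P) (hQ : IsProjector Q) (hPQ : P * Q = P)
    (hQP : Q * P = P) : P.rank + (Q - P).rank = Q.rank := by
  have h := congrArg trace (add_sub_cancel P Q)
  rw [trace_add, hP.trace_eq_rank, (hP.sub_of_mul_eq hQ hPQ hQP).trace_eq_rank,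
    hQ.trace_eq_rank] at h
  exact_mod_cast h

lemma eq_of_mul_eq_of_rank_le (hP : IsProjector P) (hQ : IsProjector Q) (hPQ : P * Q = P)
    (hQP : Q * P = P) (h : Q.rank ≤ P.rank) : P = Q := by
  by_contra hne
  have := (hP.sub_of_mul_eq hQ hPQ hQP).rank_pos (sub_ne_zero.mpr (Ne.symm hne))
  have := hP.rank_add_rank_sub hQ hPQ hQP
  omega

end IsProjector

section CommutingIdempotents

variable {A : Type*} [Ring A] {p q r : A}

lemma mul_join_of_mul_eq (hpq : p * q = p) : p * (q + r - q * r) = p := by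
  rw [mul_sub, mul_add, ← mul_assoc, hpq]; abel

lemma mul_join_self_right (hr : IsIdempotentElem r) (hqr : Commute q r) :
    r * (q + r - q * r) = r := by
  rw [hqr.eq, mul_sub, mul_add, ← mul_assoc, hr.eq]; abel

lemma join_mul_of_mul_eq (hpr : p * r = p) (hqr : q * r = q) :
    (p + q - p * q) * r = p + q - p * q := by
  rw [sub_mul, add_mul, mul_assoc, hpr, hqr]

lemma join_mul_eq_of_mul_eq (hp : IsIdempotentElem p) (hpq : p * q = p)
    (hrq : r * q = p * r) :
    (p + r - p * r) * q = p := by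
  rw [sub_mul, add_mul, mul_assoc, hpq, hrq, ← mul_assoc, hp.eq]; abel

end CommutingIdempotents

namespace IsQIVPM

variable {d : ℕ} {L R : Matrix (Fin d) (Fin d) ℂ → ℝ} {P Q : Matrix (Fin d) (Fin d) ℂ}

lemma supermodular (hLR : IsQIVPM L R) (hP : IsProjector P) (hQ : IsProjector Q)
    (hPQ : P * Q = Q * P) : L P + L Q ≤ L (P + Q - P * Q) + L (P * Q) :=
  (hLR.2.2.2.2 P Q hP hQ hPQ).1

lemma mono (hLR : IsQIVPM L R) (hP : IsProjector P) (hQ : IsProjector Q) (hPQ : P * Q = P)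
    (hQP : Q * P = P) : L P ≤ L Q := by
  have hG := hP.sub_of_mul_eq hQ hPQ hQP
  have hPG : P * (Q - P) = 0 := by rw [mul_sub, hPQ, hP.1, sub_self]
  have hGP : (Q - P) * P = 0 := by rw [sub_mul, hQP, hP.1, sub_self]
  have h := hLR.supermodular hP hG (by rw [hPG, hGP])
  rw [hPG, hLR.2.1.1, add_sub_cancel, sub_zero] at h
  linarith [(hLR.1 _ hG).1]

lemma trace_mul_re_le (hLR : IsQIVPM L R) {ρ : Matrix (Fin d) (Fin d) ℂ} (hρ : ρ.trace = 1)
    (hP : IsProjector P) (h : L (1 - P) ≤ (ρ * (1 - P)).trace.re) : (ρ * P).trace.re ≤ R P := by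
  rw [(hLR.2.2.2.1 P hP).1, mul_sub, mul_one, trace_sub, hρ, Complex.sub_re,
    Complex.one_re] at h
  linarith

end IsQIVPM

section MarginalStates

variable {d : ℕ}

structure IsCommutingProjectorLattice (S : Set (Matrix (Fin d) (Fin d) ℂ)) : Prop where
  isProjector : ∀ P ∈ S, IsProjector P
  commute : ∀ P ∈ S, ∀ Q ∈ S, P * Q = Q * P
  one_mem : 1 ∈ S
  mul_mem : ∀ P ∈ S, ∀ Q ∈ S, P * Q ∈ S
  join_mem : ∀ P ∈ S, ∀ Q ∈ S, P + Q - P * Q ∈ S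

def CoversIn (S : Set (Matrix (Fin d) (Fin d) ℂ)) (P Q : Matrix (Fin d) (Fin d) ℂ) : Prop :=
  P * Q = P ∧ P ≠ Q ∧ ∀ Y ∈ S, P * Y = P → Y * Q = Y → Y = P ∨ Y = Q

/-- `ρ` spreads the mass `1 - L P` left above `P` so that every `X ∈ S` receives at least its
marginal value. -/
def IsMarginalState (L : Matrix (Fin d) (Fin d) ℂ → ℝ) (S : Set (Matrix (Fin d) (Fin d) ℂ))
    (P ρ : Matrix (Fin d) (Fin d) ℂ) : Prop :=
  ρ.PosSemidef ∧ ρ.trace = ((1 - L P : ℝ) : ℂ) ∧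
    ∀ X ∈ S, L (P + X - P * X) - L P ≤ (ρ * X).trace.re

lemma isMarginalState_one {L : Matrix (Fin d) (Fin d) ℂ → ℝ} (hL : L 1 = 1)
    (S : Set (Matrix (Fin d) (Fin d) ℂ)) : IsMarginalState L S 1 0 :=
  ⟨.zero, by simp [hL], fun X _ => by simp⟩

namespace IsCommutingProjectorLattice

variable {L R : Matrix (Fin d) (Fin d) ℂ → ℝ} {S : Set (Matrix (Fin d) (Fin d) ℂ)}
  {P Q : Matrix (Fin d) (Fin d) ℂ}

lemma exists_coversIn (hS : IsCommutingProjectorLattice S) (hP : P ≠ 1) :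
    ∃ Q ∈ S, CoversIn S P Q := by
  obtain ⟨Q, ⟨hQS, hPQ, hQP⟩, hmin⟩ :=
    (measure fun Y : Matrix (Fin d) (Fin d) ℂ => Y.rank).wf.has_min
      {Y | Y ∈ S ∧ P * Y = P ∧ Y ≠ P} ⟨1, hS.one_mem, mul_one P, Ne.symm hP⟩
  refine ⟨Q, hQS, hPQ, Ne.symm hQP, fun Y hYS hPY hYQ => or_iff_not_imp_left.mpr fun hYP => ?_⟩
  exact (hS.isProjector Y hYS).eq_of_mul_eq_of_rank_le (hS.isProjector Q hQS) hYQ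
    (by rw [hS.commute Q hQS Y hYS, hYQ]) (not_lt.mp (hmin Y ⟨hYS, hPY, hYP⟩))

lemma rank_lt_of_coversIn (hS : IsCommutingProjectorLattice S) (hP : P ∈ S) (hQ : Q ∈ S)
    (h : CoversIn S P Q) : P.rank < Q.rank :=
  lt_of_not_ge fun hle => h.2.1 <| (hS.isProjector P hP).eq_of_mul_eq_of_rank_le
    (hS.isProjector Q hQ) h.1 (by rw [hS.commute Q hQ P hP, h.1]) hle

/-- Every `X ∈ S` either misses the atom `Q - P` or contains it. -/
lemma mul_eq_or_mul_sub_mul_eq_of_coversIn (hS : IsCommutingProjectorLattice S) (hP : P ∈ S)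
    (hQ : Q ∈ S) (h : CoversIn S P Q) {X : Matrix (Fin d) (Fin d) ℂ} (hX : X ∈ S) :
    Q * X = P * X ∨ Q * X - P * X = Q - P := by
  have hPQX : P * (Q * X) = P * X := by rw [← mul_assoc, h.1]
  have hQXQ : Q * X * Q = Q * X := by
    rw [mul_assoc, ← hS.commute Q hQ X hX, ← mul_assoc, (hS.isProjector Q hQ).1]
  have hYP : P + Q * X - P * (Q * X) - P = Q * X - P * X := by rw [hPQX]; abel
  rcases h.2.2 _ (hS.join_mem P hP _ (hS.mul_mem Q hQ X hX))
      (mul_join_of_mul_eq (hS.isProjector P hP).1) (join_mul_of_mul_eq h.1 hQXQ) with hY | hY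
  · rw [hY, sub_self, eq_comm, sub_eq_zero] at hYP
    exact .inl hYP
  · rw [hY] at hYP
    exact .inr hYP.symm

lemma isProjector_sub_of_coversIn (hS : IsCommutingProjectorLattice S) (hP : P ∈ S)
    (hQ : Q ∈ S) (h : CoversIn S P Q) : IsProjector (Q - P) :=
  (hS.isProjector P hP).sub_of_mul_eq (hS.isProjector Q hQ) h.1
    (by rw [hS.commute Q hQ P hP, h.1])

lemma marginal_le_of_coversIn (hLR : IsQIVPM L R) (hS : IsCommutingProjectorLattice S)
    (hP : P ∈ S) (hQ : Q ∈ S) (h : CoversIn S P Q) {X : Matrix (Fin d) (Fin d) ℂ} (hX : X ∈ S) :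
    L (P + X - P * X) - L P ≤
      L (Q + X - Q * X) - L Q + (L Q - L P) / (Q - P).rank * ((Q - P) * X).trace.re := by
  have hPX := hS.join_mem P hP X hX
  rcases hS.mul_eq_or_mul_sub_mul_eq_of_coversIn hP hQ h hX with hmiss | hcontains
  · have hmeet : (P + X - P * X) * Q = P := join_mul_eq_of_mul_eq (hS.isProjector P hP).1 h.1
      (by rw [← hS.commute Q hQ X hX, hmiss])
    have hjoinQ : P + X - P * X + Q - P = Q + X - Q * X := by rw [hmiss]; abel
    have hsuper := hLR.supermodular (hS.isProjector _ hPX) (hS.isProjector Q hQ)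
      (hS.commute _ hPX Q hQ)
    rw [hmeet, hjoinQ] at hsuper
    rw [show (Q - P) * X = 0 by rw [sub_mul, hmiss, sub_self], trace_zero, Complex.zero_re,
      mul_zero, add_zero]
    linarith
  · have hQXS := hS.join_mem Q hQ X hX
    have hle : (P + X - P * X) * (Q + X - Q * X) = P + X - P * X :=
      join_mul_of_mul_eq (mul_join_of_mul_eq h.1)
        (mul_join_self_right (hS.isProjector X hX).1 (hS.commute Q hQ X hX))
    have hmono := hLR.mono (hS.isProjector _ hPX) (hS.isProjector _ hQXS) hle
      (by rw [hS.commute _ hQXS _ hPX, hle])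
    have hrank : ((Q - P).rank : ℝ) ≠ 0 := Nat.cast_ne_zero.mpr
      ((hS.isProjector_sub_of_coversIn hP hQ h).rank_pos (sub_ne_zero.mpr h.2.1.symm)).ne'
    rw [show (Q - P) * X = Q - P by rw [sub_mul, hcontains],
      (hS.isProjector_sub_of_coversIn hP hQ h).trace_eq_rank, ← Complex.ofReal_natCast,
      Complex.ofReal_re, div_mul_cancel₀ _ hrank]
    linarith

lemma isMarginalState_of_coversIn (hLR : IsQIVPM L R) (hS : IsCommutingProjectorLattice S)
    (hP : P ∈ S) (hQ : Q ∈ S) (h : CoversIn S P Q) {ρ : Matrix (Fin d) (Fin d) ℂ}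
    (hρ : IsMarginalState L S Q ρ) :
    IsMarginalState L S P (ρ + ((L Q - L P) / (Q - P).rank) • (Q - P)) := by
  have hG := hS.isProjector_sub_of_coversIn hP hQ h
  have hrank : (0 : ℝ) < (Q - P).rank :=
    Nat.cast_pos.mpr (hG.rank_pos (sub_ne_zero.mpr h.2.1.symm))
  have hLPQ : L P ≤ L Q := hLR.mono (hS.isProjector P hP) (hS.isProjector Q hQ) h.1
    (by rw [hS.commute Q hQ P hP, h.1])
  refine ⟨hρ.1.add (hG.posSemidef.smul (div_nonneg (sub_nonneg.2 hLPQ) hrank.le)), ?_,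
    fun X hX => ?_⟩
  · rw [trace_add, trace_smul, hρ.2.1, hG.trace_eq_rank, Complex.real_smul,
      ← Complex.ofReal_natCast, ← Complex.ofReal_mul, div_mul_cancel₀ _ hrank.ne',
      ← Complex.ofReal_add, sub_add_sub_cancel]
  · rw [add_mul, smul_mul_assoc, trace_add, trace_smul, Complex.add_re, Complex.real_smul,
      Complex.re_ofReal_mul]
    linarith [hρ.2.2 X hX, hS.marginal_le_of_coversIn hLR hP hQ h hX]

lemma exists_isMarginalState (hLR : IsQIVPM L R) (hS : IsCommutingProjectorLattice S)
    (hP : P ∈ S) : ∃ ρ, IsMarginalState L S P ρ := by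
  induction hn : d - P.rank using Nat.strong_induction_on generalizing P with
  | _ n ih =>
    by_cases hP1 : P = 1
    · exact ⟨0, hP1 ▸ isMarginalState_one hLR.2.2.1.1 S⟩
    obtain ⟨Q, hQ, hcov⟩ := hS.exists_coversIn hP1
    have hlt := hS.rank_lt_of_coversIn hP hQ hcov
    have hle : Q.rank ≤ d := (rank_le_card_width Q).trans_eq (Fintype.card_fin d)
    obtain ⟨ρ, hρ⟩ := ih (d - Q.rank) (by omega) hQ rfl
    exact ⟨_, hS.isMarginalState_of_coversIn hLR hP hQ hcov hρ⟩

end IsCommutingProjectorLattice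

end MarginalStates

/-- Non-empty core for compatible measurements: a QIVPM restricted to a commuting
subspace of events is consistent with at least one state. -/
theorem nonempty_core_for_commuting_events (d : ℕ)
    (L R : Matrix (Fin d) (Fin d) ℂ → ℝ) (hQ : IsQIVPM L R)
    (S : Set (Matrix (Fin d) (Fin d) ℂ))
    (hproj : ∀ P ∈ S, IsProjector P)
    (hcomm : ∀ P ∈ S, ∀ Q ∈ S, P * Q = Q * P)
    (h0 : (0 : Matrix (Fin d) (Fin d) ℂ) ∈ S)
    (h1 : (1 : Matrix (Fin d) (Fin d) ℂ) ∈ S)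
    (hcompl : ∀ P ∈ S, 1 - P ∈ S)
    (hmul : ∀ P ∈ S, ∀ Q ∈ S, P * Q ∈ S)
    (hjoin : ∀ P ∈ S, ∀ Q ∈ S, P + Q - P * Q ∈ S) :
    ∃ ρ : Matrix (Fin d) (Fin d) ℂ, IsState ρ ∧
      ∀ P ∈ S, L P ≤ (Matrix.trace (ρ * P)).re ∧ (Matrix.trace (ρ * P)).re ≤ R P := by
  obtain ⟨ρ, hpsd, htrace, hgain⟩ :=
    IsCommutingProjectorLattice.exists_isMarginalState hQ ⟨hproj, hcomm, h1, hmul, hjoin⟩ h0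
  have htrace1 : ρ.trace = 1 := by simpa [hQ.2.1.1] using htrace
  have hlower : ∀ X ∈ S, L X ≤ (ρ * X).trace.re := fun X hX => by
    simpa [hQ.2.1.1] using hgain X hX
  exact ⟨ρ, ⟨hpsd, htrace1⟩, fun P hP =>
    ⟨hlower P hP, hQ.trace_mul_re_le htrace1 (hproj P hP) (hlower _ (hcompl P hP))⟩⟩
end

section
/- Let (L, R) be a 0-deterministic QIVPM on ℂ^d and let Q : Fin d → Matrix (Fin d) (Fin d) ℂ be a family of projectors with Q i * Q j = 0 for all i ≠ j and ∑ i, Q i = 1 (e.g. the rank-one projections onto an orthonormal basis). Then there is exactly one index i with (L (Q i), R (Q i)) = (1, 1), and (L (Q j), R (Q j)) = (0, 0) for every j ≠ i. -/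
open Matrix
open scoped ComplexOrder

/- Convexity applied to orthogonal pairs makes `L` superadditive and `R` subadditive on orthogonal
sums, so `∑ L (Q i) ≤ L 1 = 1 = R 1 ≤ ∑ R (Q i)`; since `L` and `R`
agree on each `Q i`, the values `L (Q i) ∈ {0, 1}` sum to exactly `1`, and exactly one of them is `1`. -/

lemma exists_eq_one_forall_ne_eq_zero {ι : Type*} [Fintype ι] {f : ι → ℝ}
    (hf : ∀ i, f i = 0 ∨ f i = 1) (hsum : ∑ i, f i = 1) :
    ∃ i, f i = 1 ∧ ∀ j, j ≠ i → f j = 0 := by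
  classical
  obtain ⟨i, hi⟩ : ∃ i, f i = 1 := by
    by_contra! hne
    have hzero : ∑ i, f i = 0 :=
      Finset.sum_eq_zero fun i _ => (hf i).resolve_right (hne i)
    linarith
  have hnonneg : ∀ j, 0 ≤ f j := fun j => by rcases hf j with h | h <;> simp [h]
  have hrest : ∑ j ∈ Finset.univ.erase i, f j = 0 := by
    linarith [Finset.add_sum_erase Finset.univ f (Finset.mem_univ i)]
  refine ⟨i, hi, fun j hj => ?_⟩
  exact (Finset.sum_eq_zero_iff_of_nonneg fun j _ => hnonneg j).mp hrest j
    (Finset.mem_erase.mpr ⟨hj, Finset.mem_univ j⟩)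

section OrthogonalFamily

variable {d : ℕ} {ι : Type*} {Q : ι → Matrix (Fin d) (Fin d) ℂ}

lemma mul_sum_eq_zero_of_orthogonal (horth : ∀ i j, i ≠ j → Q i * Q j = 0)
    {s : Finset ι} {a : ι} (ha : a ∉ s) : Q a * ∑ i ∈ s, Q i = 0 := by
  rw [Finset.mul_sum]
  exact Finset.sum_eq_zero fun i hi => horth a i fun h => ha (h ▸ hi)

lemma sum_mul_eq_zero_of_orthogonal (horth : ∀ i j, i ≠ j → Q i * Q j = 0)
    {s : Finset ι} {a : ι} (ha : a ∉ s) : (∑ i ∈ s, Q i) * Q a = 0 := by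
  rw [Finset.sum_mul]
  exact Finset.sum_eq_zero fun i hi => horth i a fun h => ha (h ▸ hi)

lemma isProjector_sum_of_orthogonal (hproj : ∀ i, IsProjector (Q i))
    (horth : ∀ i j, i ≠ j → Q i * Q j = 0) (s : Finset ι) : IsProjector (∑ i ∈ s, Q i) := by
  classical
  constructor
  · rw [Finset.sum_mul]
    refine Finset.sum_congr rfl fun i hi => ?_
    rw [Finset.mul_sum, Finset.sum_eq_single i (fun j _ hj => horth i j hj.symm)
      (fun h => absurd hi h)]
    exact (hproj i).1
  · rw [Matrix.conjTranspose_sum]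
    exact Finset.sum_congr rfl fun i _ => (hproj i).2

end OrthogonalFamily

namespace IsQIVPM

variable {d : ℕ} {L R : Matrix (Fin d) (Fin d) ℂ → ℝ}

lemma add_le_L_add_and_R_add_le (hQ : IsQIVPM L R) {P₀ P₁ : Matrix (Fin d) (Fin d) ℂ}
    (h₀ : IsProjector P₀) (h₁ : IsProjector P₁) (h₀₁ : P₀ * P₁ = 0) (h₁₀ : P₁ * P₀ = 0) :
    L P₀ + L P₁ ≤ L (P₀ + P₁) ∧ R (P₀ + P₁) ≤ R P₀ + R P₁ := by
  obtain ⟨-, ⟨hL0, hR0⟩, -, -, hconv⟩ := hQ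
  have h := hconv P₀ P₁ h₀ h₁ (h₀₁.trans h₁₀.symm)
  rw [h₀₁, sub_zero, hL0, hR0, add_zero, add_zero] at h
  exact h

variable {ι : Type*} {Q : ι → Matrix (Fin d) (Fin d) ℂ}

lemma sum_L_le_L_sum_and_R_sum_le_sum_R (hQ : IsQIVPM L R) (hproj : ∀ i, IsProjector (Q i))
    (horth : ∀ i j, i ≠ j → Q i * Q j = 0) (s : Finset ι) :
    ∑ i ∈ s, L (Q i) ≤ L (∑ i ∈ s, Q i) ∧ R (∑ i ∈ s, Q i) ≤ ∑ i ∈ s, R (Q i) := by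
  classical
  induction s using Finset.induction_on with
  | empty =>
    have ⟨_, ⟨hL0, hR0⟩, _⟩ := hQ
    simp [hL0, hR0]
  | insert a s ha ih =>
    have hpair := hQ.add_le_L_add_and_R_add_le (hproj a)
      (isProjector_sum_of_orthogonal hproj horth s) (mul_sum_eq_zero_of_orthogonal horth ha)
      (sum_mul_eq_zero_of_orthogonal horth ha)
    simp only [Finset.sum_insert ha]
    constructor <;> linarith [ih.1, ih.2, hpair.1, hpair.2]

end IsQIVPM

lemma IsZeroDet.L_eq_R {d : ℕ} {L R : Matrix (Fin d) (Fin d) ℂ → ℝ} (hdet : IsZeroDet L R)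
    {P : Matrix (Fin d) (Fin d) ℂ} (hP : IsProjector P) : L P = R P := by
  rcases hdet P hP with ⟨hL, hR⟩ | ⟨hL, hR⟩ <;> rw [hL, hR]

/-- Under a 0-deterministic QIVPM, a complete family of mutually orthogonal
projectors summing to `1` has exactly one member assigned `[1,1]`, the rest `[0,0]`. -/
theorem zeroDet_unique_certain_event (d : ℕ)
    (L R : Matrix (Fin d) (Fin d) ℂ → ℝ) (hQ : IsQIVPM L R) (hdet : IsZeroDet L R)
    (Q : Fin d → Matrix (Fin d) (Fin d) ℂ)
    (hproj : ∀ i, IsProjector (Q i))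
    (horth : ∀ i j, i ≠ j → Q i * Q j = 0)
    (hsum : ∑ i, Q i = 1) :
    ∃ i, (L (Q i) = 1 ∧ R (Q i) = 1) ∧
      ∀ j, j ≠ i → L (Q j) = 0 ∧ R (Q j) = 0 := by
  have ⟨_, _, ⟨hL1, hR1⟩, _⟩ := hQ
  have hLR : ∀ i, L (Q i) = R (Q i) := fun i => hdet.L_eq_R (hproj i)
  obtain ⟨hLsum, hRsum⟩ := hQ.sum_L_le_L_sum_and_R_sum_le_sum_R hproj horth Finset.univ
  rw [hsum, hL1] at hLsum
  rw [hsum, hR1] at hRsum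
  have hsumL : ∑ i, L (Q i) = 1 := hLsum.antisymm (by simpa only [hLR] using hRsum)
  obtain ⟨i, hi, hne⟩ := exists_eq_one_forall_ne_eq_zero (f := fun i => L (Q i))
    (fun i => (hdet (Q i) (hproj i)).imp And.left And.left) hsumL
  exact ⟨i, ⟨hi, hLR i ▸ hi⟩, fun j hj => ⟨hne j hj, hLR j ▸ hne j hj⟩⟩
end

section
/- (Restriction of a QIVPM to commuting events is a classical IVPM) Let (L, R) be a QIVPM on ℂ^d and let Q : Fin d → Matrix (Fin d) (Fin d) ℂ be projectors with Q i * Q j = 0 for all i ≠ j and ∑ i, Q i = 1. For S : Finset (Fin d) define ν_L S = L (∑ i in S, Q i) and ν_R S = R (∑ i in S, Q i). Then (ν_L, ν_R) is a classical IVPM on subsets of Fin d: ν_L ∅ = ν_R ∅ = 0; ν_L Finset.univ = ν_R Finset.univ = 1; ν_L Sᶜ = 1 − ν_R S and ν_R Sᶜ = 1 − ν_L S for every S; 0 ≤ ν_L S ≤ ν_R S ≤ 1 for every S; and for all S, T: ν_L S + ν_L T ≤ ν_L (S ∪ T) + ν_L (S ∩ T) and ν_R (S ∪ T) + ν_R (S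 ∩ T) ≤ ν_R S + ν_R T. -/
open Matrix
open scoped ComplexOrder

/-!
Orthogonal projectors `Q i` summing to `1` generate a Boolean algebra of commuting projectors
`P_S = ∑ i ∈ S, Q i`, on which `P_S * P_T = P_{S ∩ T}`, `P_{Sᶜ} = 1 - P_S` and
`P_{S ∪ T} = P_S + P_T - P_S * P_T`. Each classical IVPM axiom for `S ↦ P_S` is therefore the
corresponding QIVPM axiom applied to these projectors.
-/

theorem OrthogonalIdempotents.sum_mul_sum {R ι : Type*} [Semiring R] [DecidableEq ι]
    {e : ι → R} (he : OrthogonalIdempotents e) (s t : Finset ι) :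
    (∑ i ∈ s, e i) * (∑ j ∈ t, e j) = ∑ i ∈ s ∩ t, e i := by
  rw [Finset.sum_mul, ← Finset.sum_ite_mem]
  refine Finset.sum_congr rfl fun i _ => ?_
  split_ifs with hi
  exacts [he.mul_sum_of_mem hi, he.mul_sum_of_notMem hi]

theorem OrthogonalIdempotents.sum_union {R ι : Type*} [Ring R] [DecidableEq ι]
    {e : ι → R} (he : OrthogonalIdempotents e) (s t : Finset ι) :
    ∑ i ∈ s ∪ t, e i = ∑ i ∈ s, e i + ∑ i ∈ t, e i - (∑ i ∈ s, e i) * (∑ j ∈ t, e j) := by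
  rw [he.sum_mul_sum, eq_sub_iff_add_eq, Finset.sum_union_inter]

theorem Finset.sum_compl_eq_sub {M ι : Type*} [AddCommGroup M] [Fintype ι] [DecidableEq ι]
    {f : ι → M} {a : M} (hf : ∑ i, f i = a) (s : Finset ι) :
    ∑ i ∈ sᶜ, f i = a - ∑ i ∈ s, f i := by
  rw [eq_sub_iff_add_eq, Finset.sum_compl_add_sum, hf]

theorem isProjector_sum {d : ℕ} {ι : Type*} {Q : ι → Matrix (Fin d) (Fin d) ℂ}
    (hQ : ∀ i, IsProjector (Q i)) (he : OrthogonalIdempotents Q) (s : Finset ι) :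
    IsProjector (∑ i ∈ s, Q i) :=
  ⟨he.isIdempotentElem_sum, by
    rw [conjTranspose_sum]
    exact Finset.sum_congr rfl fun i _ => (hQ i).2⟩

/-- Restriction of a QIVPM to a complete commuting family of projectors yields a
classical IVPM on the subsets of `Fin d`. -/
theorem QIVPM_restriction_is_classical_IVPM (d : ℕ)
    (L R : Matrix (Fin d) (Fin d) ℂ → ℝ) (hQ : IsQIVPM L R)
    (Q : Fin d → Matrix (Fin d) (Fin d) ℂ)
    (hproj : ∀ i, IsProjector (Q i))
    (horth : ∀ i j, i ≠ j → Q i * Q j = 0)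
    (hsum : ∑ i, Q i = 1) :
    (L (∑ i ∈ (∅ : Finset (Fin d)), Q i) = 0 ∧ R (∑ i ∈ (∅ : Finset (Fin d)), Q i) = 0) ∧
    (L (∑ i ∈ (Finset.univ : Finset (Fin d)), Q i) = 1 ∧
      R (∑ i ∈ (Finset.univ : Finset (Fin d)), Q i) = 1) ∧
    (∀ S : Finset (Fin d),
      L (∑ i ∈ Sᶜ, Q i) = 1 - R (∑ i ∈ S, Q i) ∧
      R (∑ i ∈ Sᶜ, Q i) = 1 - L (∑ i ∈ S, Q i)) ∧
    (∀ S : Finset (Fin d),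
      0 ≤ L (∑ i ∈ S, Q i) ∧ L (∑ i ∈ S, Q i) ≤ R (∑ i ∈ S, Q i) ∧
      R (∑ i ∈ S, Q i) ≤ 1) ∧
    (∀ S T : Finset (Fin d),
      L (∑ i ∈ S, Q i) + L (∑ i ∈ T, Q i) ≤
        L (∑ i ∈ S ∪ T, Q i) + L (∑ i ∈ S ∩ T, Q i) ∧
      R (∑ i ∈ S ∪ T, Q i) + R (∑ i ∈ S ∩ T, Q i) ≤
        R (∑ i ∈ S, Q i) + R (∑ i ∈ T, Q i)) := by
  obtain ⟨hbound, ⟨hL0, hR0⟩, hone, hcompl, hconv⟩ := hQ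
  have he : OrthogonalIdempotents Q := ⟨fun i => (hproj i).1, fun i j => horth i j⟩
  have hP : ∀ S : Finset (Fin d), IsProjector (∑ i ∈ S, Q i) := isProjector_sum hproj he
  refine ⟨by rw [Finset.sum_empty]; exact ⟨hL0, hR0⟩, by rwa [hsum], fun S => ?_,
    fun S => hbound _ (hP S), fun S T => ?_⟩
  · rw [Finset.sum_compl_eq_sub hsum]
    exact hcompl _ (hP S)
  · have hcomm : (∑ i ∈ S, Q i) * (∑ i ∈ T, Q i) = (∑ i ∈ T, Q i) * (∑ i ∈ S, Q i) := by
      rw [he.sum_mul_sum, he.sum_mul_sum, Finset.inter_comm]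
    rw [he.sum_union, ← he.sum_mul_sum]
    exact hconv _ _ (hP S) (hP T) hcomm
end

section
/- (Determinate expectation values under 0-deterministic QIVPMs) Let (L, R) be a 0-deterministic QIVPM on ℂ^d, let Q : Fin d → Matrix (Fin d) (Fin d) ℂ be projectors with Q i * Q j = 0 for all i ≠ j and ∑ i, Q i = 1, and let λ : Fin d → ℝ (the eigenvalues of an observable with spectral decomposition ∑ i, λ i • Q i). Let ρ be a state on ℂ^d consistent with (L, R) at every Q i, and let j be an index with (L (Q j), R (Q j)) = (1, 1). Then the expectation value of the observable in the state ρ equals the eigenvalue λ j: ∑ i, λ i * Re (Matrix.trace (ρ * Q i)) = λ j. -/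
open Matrix
open scoped ComplexOrder

/-
The numbers `tr (ρ Q i)` form a probability vector: they are nonnegative because they dominate
the lower endpoints `L (Q i) ≥ 0`, and they sum to `tr ρ = 1` because the `Q i` resolve the
identity. Consistency with the interval `[1, 1]` at `Q j` forces `tr (ρ Q j) = 1`, so this vector
is concentrated at `j` and the expectation value collapses to `λ j`.
-/

theorem Matrix.sum_trace_mul_eq_trace {n ι α : Type*} [Fintype n] [DecidableEq n] [Fintype ι]
    [Semiring α] {Q : ι → Matrix n n α} (hQ : ∑ i, Q i = 1) (A : Matrix n n α) :
    ∑ i, trace (A * Q i) = trace A := by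
  rw [← trace_sum, ← Finset.mul_sum, hQ, mul_one]

theorem Fintype.sum_mul_eq_of_nonneg_of_sum_eq_apply {ι R : Type*} [Fintype ι] [Ring R]
    [PartialOrder R] [IsOrderedAddMonoid R] {t : ι → R} (ht : ∀ i, 0 ≤ t i) {j : ι}
    (hsum : ∑ i, t i = t j) (lam : ι → R) :
    ∑ i, lam i * t i = lam j * t j := by
  classical
  have hrest : ∑ i ∈ Finset.univ.erase j, t i = 0 := by
    rw [← add_eq_left (a := t j), Finset.add_sum_erase _ _ (Finset.mem_univ j), hsum]
  have hzero : ∀ i ≠ j, t i = 0 := fun i hij =>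
    (Finset.sum_eq_zero_iff_of_nonneg fun k _ => ht k).mp hrest i
      (Finset.mem_erase.mpr ⟨hij, Finset.mem_univ i⟩)
  exact Fintype.sum_eq_single j fun i hij => by rw [hzero i hij, mul_zero]

theorem zeroDet_expectation_is_eigenvalue_general (d : ℕ)
    (L R : Matrix (Fin d) (Fin d) ℂ → ℝ) (hQ : IsQIVPM L R)
    (Q : Fin d → Matrix (Fin d) (Fin d) ℂ)
    (hproj : ∀ i, IsProjector (Q i))
    (hsum : ∑ i, Q i = 1)
    (lam : Fin d → ℝ)
    (ρ : Matrix (Fin d) (Fin d) ℂ) (hρ : IsState ρ)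
    (hcons : ∀ i, L (Q i) ≤ (Matrix.trace (ρ * Q i)).re ∧
      (Matrix.trace (ρ * Q i)).re ≤ R (Q i))
    (j : Fin d) (hj : L (Q j) = 1 ∧ R (Q j) = 1) :
    ∑ i, lam i * (Matrix.trace (ρ * Q i)).re = lam j := by
  set t : Fin d → ℝ := fun i => (trace (ρ * Q i)).re
  have ht_nonneg : ∀ i, 0 ≤ t i := fun i => (hQ.1 (Q i) (hproj i)).1.trans (hcons i).1
  have ht_sum : ∑ i, t i = 1 := by
    rw [← Complex.re_sum, sum_trace_mul_eq_trace hsum, hρ.2, Complex.one_re]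
  have htj : t j = 1 := le_antisymm (hj.2 ▸ (hcons j).2) (hj.1 ▸ (hcons j).1)
  rw [Fintype.sum_mul_eq_of_nonneg_of_sum_eq_apply ht_nonneg (ht_sum.trans htj.symm), htj,
    mul_one]

/-- Determinate expectation values under 0-deterministic QIVPMs: if a state is
consistent with a 0-deterministic QIVPM on a complete commuting family of projectors
`Q i` (the spectral projections of an observable `∑ i, λ i • Q i`), then the
expectation value equals the eigenvalue whose projector is certain. -/
theorem zeroDet_expectation_is_eigenvalue (d : ℕ)
    (L R : Matrix (Fin d) (Fin d) ℂ → ℝ) (hQ : IsQIVPM L R) (hdet : IsZeroDet L R)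
    (Q : Fin d → Matrix (Fin d) (Fin d) ℂ)
    (hproj : ∀ i, IsProjector (Q i))
    (horth : ∀ i j, i ≠ j → Q i * Q j = 0)
    (hsum : ∑ i, Q i = 1)
    (lam : Fin d → ℝ)
    (ρ : Matrix (Fin d) (Fin d) ℂ) (hρ : IsState ρ)
    (hcons : ∀ i, L (Q i) ≤ (Matrix.trace (ρ * Q i)).re ∧
      (Matrix.trace (ρ * Q i)).re ≤ R (Q i))
    (j : Fin d) (hj : L (Q j) = 1 ∧ R (Q j) = 1) :
    ∑ i, lam i * (Matrix.trace (ρ * Q i)).re = lam j :=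
  zeroDet_expectation_is_eigenvalue_general d L R hQ Q hproj hsum lam ρ hρ hcons j hj
end
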